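/- arXiv:math/0001083 — 12 statements merged into one kernel-verified Lean document; each statement's English description precedes it below -/
import Mathlib

section
/- Let (A,B,C) be a triple of skew-adjoint ℝ-linear endomorphisms of ℂ. Then (A,B,C) satisfies the triality identity A(x*y) = x*(B y) + (C x)*y for all x,y ∈ ℂ if and only if there exist real numbers v and w such that A is multiplication by (v+w)·i, B is multiplication by v·i, and C is multiplication by w·i. In particular, the triality algebra Tri ℂ is a 2-dimensional abelian real Lie algebra. -/
/-- An ℝ-linear endomorphism of ℂ is skew-adjoint for the real inner product
`⟪x,y⟫ = Re (x * conj y)`. -/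
def SkewC (A : ℂ →ₗ[ℝ] ℂ) : Prop :=
  ∀ x y : ℂ, (A x * (starRingEnd ℂ) y).re + (x * (starRingEnd ℂ) (A y)).re = 0

/-- Every skew-adjoint real-linear endomorphism of ℂ is multiplication by a real
multiple of `I`. -/
lemma skew_mul (A : ℂ →ₗ[ℝ] ℂ) (hA : SkewC A) :
    ∀ z : ℂ, A z = (((A 1).im : ℝ) * Complex.I) * z := by
  have h1 := hA 1 1
  have h2 := hA Complex.I Complex.I
  have h3 := hA 1 Complex.I
  simp [Complex.mul_re, Complex.conj_re, Complex.conj_im] at h1 h2 h3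
  intro z
  have hz : z = z.re • (1 : ℂ) + z.im • Complex.I := by
    simp only [Complex.real_smul, mul_one, Complex.re_add_im]
  calc A z = A (z.re • (1 : ℂ) + z.im • Complex.I) := by rw [← hz]
    _ = z.re • A 1 + z.im • A Complex.I := by rw [map_add, map_smul, map_smul]
    _ = _ := by
        have h4 : (A Complex.I).re = -(A 1).im := by linarith
        apply Complex.ext <;>
          simp [Complex.mul_re, Complex.mul_im, h1, h2, h4] <;> ring

/-- A triple of skew-adjoint real-linear endomorphisms of ℂ satisfies the triality identity
`A (x*y) = x * (B y) + (C x) * y` iff there are unique reals `v`, `w` with `A`, `B`, `C`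
multiplication by `(v+w)i`, `vi`, `wi` respectively; moreover `Tri ℂ` is abelian
(with componentwise commutator brackets). -/
theorem statement0 :
    (∀ A B C : ℂ →ₗ[ℝ] ℂ, SkewC A → SkewC B → SkewC C →
      ((∀ x y : ℂ, A (x * y) = x * B y + C x * y) ↔
        ∃! vw : ℝ × ℝ,
          (∀ z : ℂ, A z = ((vw.1 + vw.2 : ℝ) * Complex.I) * z) ∧
          (∀ z : ℂ, B z = ((vw.1 : ℝ) * Complex.I) * z) ∧
          (∀ z : ℂ, C z = ((vw.2 : ℝ) * Complex.I) * z)))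
    ∧ (∀ A B C A' B' C' : ℂ →ₗ[ℝ] ℂ,
        SkewC A → SkewC B → SkewC C → SkewC A' → SkewC B' → SkewC C' →
        (∀ x y : ℂ, A (x * y) = x * B y + C x * y) →
        (∀ x y : ℂ, A' (x * y) = x * B' y + C' x * y) →
        A ∘ₗ A' = A' ∘ₗ A ∧ B ∘ₗ B' = B' ∘ₗ B ∧ C ∘ₗ C' = C' ∘ₗ C) := by
  constructor
  · intro A B C hA hB hC
    have hA' := skew_mul A hA
    have hB' := skew_mul B hB
    have hC' := skew_mul C hC
    constructor
    · intro htri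
      refine ⟨((B 1).im, (C 1).im), ⟨?_, ?_, ?_⟩, ?_⟩
      · intro z
        have h1 := htri 1 1
        rw [hA' (1 * 1), hB' 1, hC' 1] at h1
        have ha : (A 1).im = (B 1).im + (C 1).im := by
          have := congrArg Complex.im h1
          simpa [Complex.mul_im] using this
        rw [hA' z, ha]
      · exact hB'
      · exact hC'
      · rintro ⟨v, w⟩ ⟨_, hb, hc⟩
        have hbv := hb 1
        have hcw := hc 1
        rw [hB' 1] at hbv
        rw [hC' 1] at hcw
        have h1 : v = (B 1).im := by
          have := congrArg Complex.im hbv.symm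
          simpa [Complex.mul_im] using this
        have h2 : w = (C 1).im := by
          have := congrArg Complex.im hcw.symm
          simpa [Complex.mul_im] using this
        simp [h1, h2]
    · rintro ⟨⟨v, w⟩, ⟨ha, hb, hc⟩, -⟩ x y
      rw [ha (x * y), hb y, hc x]
      push_cast
      ring
  · intro A B C A' B' C' hA hB hC hA' hB' hC' _ _
    refine ⟨?_, ?_, ?_⟩ <;>
      · ext z
        simp only [LinearMap.comp_apply]
        first
        | rw [skew_mul A hA (A' z), skew_mul A' hA' z, skew_mul A' hA' (A z),
            skew_mul A hA z]
        | rw [skew_mul B hB (B' z), skew_mul B' hB' z, skew_mul B' hB' (B z),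
            skew_mul B hB z]
        | rw [skew_mul C hC (C' z), skew_mul C' hC' z, skew_mul C' hC' (C z),
            skew_mul C hC z]
        ring
end

section
/- A triple (A,B,C) of skew-adjoint ℝ-linear endomorphisms of ℍ belongs to the triality algebra Tri ℍ (i.e. A(x*y) = x*(B y) + (C x)*y for all x,y ∈ ℍ) if and only if there exist pure imaginary quaternions a₁, a₂, b₁ such that A = L_{a₁} + R_{a₂}, B = L_{b₁} + R_{a₂} and C = L_{a₁} − R_{b₁}; moreover a₁, a₂, b₁ are uniquely determined by (A,B,C). In particular, Tri ℍ is a 9-dimensional real Lie algebra. -/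
/-!
Putting `x = 1`, resp. `y = 1`, in the triality identity gives `B = A - L_{C 1}` and
`C = A - R_{B 1}`, and then `D = A - L_{C 1} - R_{B 1}` satisfies the Leibniz rule. Every
derivation of `ℍ` is inner, `D = L_d - R_d` with `d` pure imaginary, so
`(a₁, a₂, b₁) = (C 1 + d, B 1 - d, d)`; skew-adjointness of `B` and `C` makes `B 1` and `C 1`
pure imaginary. Uniqueness holds because `L_a + R_b` determines `a` once `Re a` is fixed:
`a` is determined up to a central element, and the centre of `ℍ` is `ℝ`.
-/

open Quaternion

/-- An ℝ-linear endomorphism of the quaternions is skew-adjoint for the real inner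
product `⟪p,q⟫ = Re (p * conj q)`. -/
def SkewH (A : ℍ[ℝ] →ₗ[ℝ] ℍ[ℝ]) : Prop :=
  ∀ p q : ℍ[ℝ], (A p * star q).re + (p * star (A q)).re = 0

namespace Quaternion

theorem eq_zero_of_re_eq_zero_of_forall_mul_comm {p : ℍ[ℝ]} (hp : p.re = 0)
    (h : ∀ z, p * z = z * p) : p = 0 := by
  -- `i` and `j` are kept abstract, with their coordinates as hypotheses: `simp` does not
  -- rewrite products with a structure literal through `Quaternion.re_mul` and its siblings.
  obtain ⟨i, hi⟩ : ∃ i : ℍ[ℝ], i.re = 0 ∧ i.imI = 1 ∧ i.imJ = 0 ∧ i.imK = 0 :=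
    ⟨⟨0, 1, 0, 0⟩, rfl, rfl, rfl, rfl⟩
  obtain ⟨j, hj⟩ : ∃ j : ℍ[ℝ], j.re = 0 ∧ j.imI = 0 ∧ j.imJ = 1 ∧ j.imK = 0 :=
    ⟨⟨0, 0, 1, 0⟩, rfl, rfl, rfl, rfl⟩
  have hpi := h i
  have hpj := h j
  rw [Quaternion.ext_iff] at hpi hpj
  ext <;> simp [hi, hj] at hpi hpj ⊢ <;> linarith

theorem eq_of_forall_mul_add_mul_eq {a b a' b' : ℍ[ℝ]} (hre : a.re = a'.re)
    (h : ∀ z, a * z + z * b = a' * z + z * b') : a = a' ∧ b = b' := by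
  have hsum : a + b = a' + b' := by simpa using h 1
  have ha : a - a' = 0 := by
    refine eq_zero_of_re_eq_zero_of_forall_mul_comm (by simp [hre]) fun z => ?_
    have hb : b' - b = a - a' := by rw [sub_eq_sub_iff_add_eq_add, hsum, add_comm]
    calc (a - a') * z = z * (b' - b) := by
          rw [sub_mul, mul_sub, sub_eq_sub_iff_add_eq_add, h z, add_comm]
      _ = z * (a - a') := by rw [hb]
  obtain rfl := sub_eq_zero.mp ha
  exact ⟨rfl, add_left_cancel hsum⟩

theorem exists_re_eq_zero_of_leibniz (D : ℍ[ℝ] →ₗ[ℝ] ℍ[ℝ])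
    (hD : ∀ x y, D (x * y) = x * D y + D x * y) :
    ∃ d : ℍ[ℝ], d.re = 0 ∧ ∀ z, D z = d * z - z * d := by
  obtain ⟨i, hi⟩ : ∃ i : ℍ[ℝ], i.re = 0 ∧ i.imI = 1 ∧ i.imJ = 0 ∧ i.imK = 0 :=
    ⟨⟨0, 1, 0, 0⟩, rfl, rfl, rfl, rfl⟩
  obtain ⟨j, hj⟩ : ∃ j : ℍ[ℝ], j.re = 0 ∧ j.imI = 0 ∧ j.imJ = 1 ∧ j.imK = 0 :=
    ⟨⟨0, 0, 1, 0⟩, rfl, rfl, rfl, rfl⟩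
  have h1 : D 1 = 0 := by simpa using hD 1 1
  have anticomm (u : ℍ[ℝ]) (hu : u * u = -1) : u * D u + D u * u = 0 := by
    simpa [hu, h1] using (hD u u).symm
  have hDi := anticomm i (by ext <;> simp [hi])
  have hDj := anticomm j (by ext <;> simp [hj])
  have hDk := anticomm (i * j) (by ext <;> simp [hi, hj])
  rw [hD] at hDk
  rw [Quaternion.ext_iff] at hDi hDj hDk
  -- the unique pure `d` with `d * i - i * d = D i` and `d * j - j * d = D j`
  obtain ⟨d, hd⟩ : ∃ d : ℍ[ℝ], d.re = 0 ∧ d.imI = (D j).imK / 2 ∧ d.imJ = -(D i).imK / 2 ∧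
      d.imK = (D i).imJ / 2 :=
    ⟨⟨_, _, _, _⟩, rfl, rfl, rfl, rfl⟩
  have hdi : D i = d * i - i * d := by
    ext <;> simp [hd, hi, hj] at hDi hDj hDk ⊢ <;> linarith
  have hdj : D j = d * j - j * d := by
    ext <;> simp [hd, hi, hj] at hDi hDj hDk ⊢ <;> linarith
  have hdk : D (i * j) = d * (i * j) - (i * j) * d := by
    rw [hD, hdi, hdj]; noncomm_ring
  refine ⟨d, hd.1, fun z => ?_⟩
  have hz : z = z.re • 1 + z.imI • i + z.imJ • j + z.imK • (i * j) := by
    ext <;> simp [hi, hj]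
  rw [hz]
  simp only [map_add, map_smul, h1, hdi, hdj, hdk]
  simp only [mul_add, add_mul, mul_smul_comm, smul_mul_assoc, mul_one, one_mul, smul_sub, smul_zero]
  abel

end Quaternion

theorem SkewH.re_apply_one {A : ℍ[ℝ] →ₗ[ℝ] ℍ[ℝ]} (hA : SkewH A) : (A 1).re = 0 := by
  simpa using hA 1 1

theorem exists_eq_mul_add_mul_of_triality {A B C : ℍ[ℝ] →ₗ[ℝ] ℍ[ℝ]}
    (h : ∀ x y, A (x * y) = x * B y + C x * y) :
    ∃ d : ℍ[ℝ], d.re = 0 ∧ (∀ z, A z = (C 1 + d) * z + z * (B 1 - d)) ∧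
      (∀ z, B z = d * z + z * (B 1 - d)) ∧ (∀ z, C z = (C 1 + d) * z - z * d) := by
  have hB (y : ℍ[ℝ]) : B y = A y - C 1 * y := eq_sub_of_add_eq (by simpa using (h 1 y).symm)
  have hC (x : ℍ[ℝ]) : C x = A x - x * B 1 := eq_sub_of_add_eq' (by simpa using (h x 1).symm)
  let D := A - LinearMap.mulLeft ℝ (C 1) - LinearMap.mulRight ℝ (B 1)
  have hD (z : ℍ[ℝ]) : D z = A z - C 1 * z - z * B 1 := rfl
  obtain ⟨d, hd, hDd⟩ := exists_re_eq_zero_of_leibniz D fun x y => by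
    rw [hD, hD, hD, h x y, hB y, hC x]; noncomm_ring
  have hA (z : ℍ[ℝ]) : A z = (C 1 + d) * z + z * (B 1 - d) := by
    rw [← sub_eq_zero, ← sub_eq_zero.mpr (hDd z), hD]; noncomm_ring
  refine ⟨d, hd, hA, fun z => ?_, fun z => ?_⟩
  · rw [hB, hA]; noncomm_ring
  · rw [hC, hA]; noncomm_ring

theorem statement2_general (A B C : ℍ[ℝ] →ₗ[ℝ] ℍ[ℝ])
    (hB : SkewH B) (hC : SkewH C) :
    (∀ x y : ℍ[ℝ], A (x * y) = x * B y + C x * y) ↔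
      ∃! t : ℍ[ℝ] × ℍ[ℝ] × ℍ[ℝ],
        t.1.re = 0 ∧ t.2.1.re = 0 ∧ t.2.2.re = 0 ∧
        (∀ z : ℍ[ℝ], A z = t.1 * z + z * t.2.1) ∧
        (∀ z : ℍ[ℝ], B z = t.2.2 * z + z * t.2.1) ∧
        (∀ z : ℍ[ℝ], C z = t.1 * z - z * t.2.2) := by
  constructor
  · intro h
    obtain ⟨d, hd, hAd, hBd, hCd⟩ := exists_eq_mul_add_mul_of_triality h
    refine ⟨(C 1 + d, B 1 - d, d),
      ⟨by simp [hC.re_apply_one, hd], by simp [hB.re_apply_one, hd], hd, hAd, hBd, hCd⟩, ?_⟩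
    rintro ⟨a₁, a₂, b₁⟩ ⟨ha₁, -, hb₁, hA₁, hB₁, -⟩
    dsimp only at ha₁ hb₁ hA₁ hB₁
    obtain ⟨rfl, rfl⟩ := Quaternion.eq_of_forall_mul_add_mul_eq
      (by simp [ha₁, hC.re_apply_one, hd]) fun z => (hA₁ z).symm.trans (hAd z)
    obtain ⟨rfl, -⟩ := Quaternion.eq_of_forall_mul_add_mul_eq
      (by simp [hb₁, hd]) fun z => (hB₁ z).symm.trans (hBd z)
    rfl
  · rintro ⟨t, ⟨-, -, -, hAt, hBt, hCt⟩, -⟩ x y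
    rw [hAt, hBt, hCt]
    noncomm_ring

/-- A triple `(A,B,C)` of skew-adjoint real-linear endomorphisms of ℍ satisfies the
triality identity `A (x*y) = x * (B y) + (C x) * y` iff there are unique pure imaginary
quaternions `a₁, a₂, b₁` with `A = L_{a₁} + R_{a₂}`, `B = L_{b₁} + R_{a₂}` and
`C = L_{a₁} - R_{b₁}`.  (In particular `Tri ℍ` is parametrised by `(ℍ')³`, so it is a
9-dimensional real Lie algebra.) -/
theorem statement2 (A B C : ℍ[ℝ] →ₗ[ℝ] ℍ[ℝ])
    (hA : SkewH A) (hB : SkewH B) (hC : SkewH C) :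
    (∀ x y : ℍ[ℝ], A (x * y) = x * B y + C x * y) ↔
      ∃! t : ℍ[ℝ] × ℍ[ℝ] × ℍ[ℝ],
        t.1.re = 0 ∧ t.2.1.re = 0 ∧ t.2.2.re = 0 ∧
        (∀ z : ℍ[ℝ], A z = t.1 * z + z * t.2.1) ∧
        (∀ z : ℍ[ℝ], B z = t.2.2 * z + z * t.2.1) ∧
        (∀ z : ℍ[ℝ], C z = t.1 * z - z * t.2.2) :=
  statement2_general A B C hB hC
end

section
/- Let K be a real composition algebra. The map T defined by T(D,a,b) = (D + L_a − R_b, D − L_a − L_b − R_b, D + L_a + R_a + R_b), for D ∈ Der K and a,b ∈ K′, is an ℝ-linear bijection from Der K × K′ × K′ onto the triality algebra Tri K. -/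
/-! Basic notions for a real composition algebra `K`, presented via the symmetric
bilinear form `Bf` obtained by polarizing the multiplicative quadratic form
(`N x = Bf x x` and `⟨x,y⟩ = Bf x y`). -/

variable {K : Type*} [NonAssocRing K] [Module ℝ K]
  [SMulCommClass ℝ K K] [IsScalarTower ℝ K K]

/-- `Bf` is the polarization (with the factor 1/2) of a multiplicative nondegenerate
quadratic form on the finite-dimensional real algebra `K`; this is the data of a real
composition algebra. -/
structure IsCompAlg (Bf : K →ₗ[ℝ] K →ₗ[ℝ] ℝ) : Prop where
  symm : ∀ x y : K, Bf x y = Bf y x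
  nondeg : ∀ x : K, (∀ y : K, Bf x y = 0) → x = 0
  comp : ∀ x y : K, Bf (x * y) (x * y) = Bf x x * Bf y y

/-- The conjugation `x ↦ 2⟨x,1⟩·1 - x` of a composition algebra. -/
def conjK (Bf : K →ₗ[ℝ] K →ₗ[ℝ] ℝ) (x : K) : K := (2 * Bf x 1) • (1 : K) - x

/-- Left multiplication `L_a` as a real-linear map. -/
def Lm (a : K) : K →ₗ[ℝ] K := LinearMap.mulLeft ℝ a

/-- Right multiplication `R_a` as a real-linear map. -/
def Rm (a : K) : K →ₗ[ℝ] K := LinearMap.mulRight ℝ a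

/-- A real-linear endomorphism of `K` lies in `𝔰𝔬(K)`. -/
def Skw (Bf : K →ₗ[ℝ] K →ₗ[ℝ] ℝ) (A : K →ₗ[ℝ] K) : Prop :=
  ∀ x y : K, Bf (A x) y + Bf x (A y) = 0

/-- Membership in the triality algebra `Tri K ⊆ 𝔰𝔬(K)³`. -/
def InTri (Bf : K →ₗ[ℝ] K →ₗ[ℝ] ℝ)
    (T : (K →ₗ[ℝ] K) × (K →ₗ[ℝ] K) × (K →ₗ[ℝ] K)) : Prop :=
  Skw Bf T.1 ∧ Skw Bf T.2.1 ∧ Skw Bf T.2.2 ∧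
    ∀ x y : K, T.1 (x * y) = x * T.2.1 y + T.2.2 x * y

/-- A derivation of the algebra `K`. -/
def IsDerK (D : K →ₗ[ℝ] K) : Prop := ∀ x y : K, D (x * y) = D x * y + x * D y

set_option linter.unusedSectionVars false
set_option maxHeartbeats 1000000

section AuxCompAlg

variable (Bf : K →ₗ[ℝ] K →ₗ[ℝ] ℝ)

lemma p1 (hca : IsCompAlg Bf) (x y v : K) :
    Bf (x * y) (x * v) = Bf x x * Bf y v := by
  have h1 := hca.comp x (y + v)
  simp only [mul_add, map_add, LinearMap.add_apply] at h1
  linear_combination (h1 - hca.symm (x*v) (x*y) + Bf x x * hca.symm v y) / 2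
    - hca.comp x y / 2 - hca.comp x v / 2

lemma p2 (hca : IsCompAlg Bf) (x u y : K) :
    Bf (x * y) (u * y) = Bf x u * Bf y y := by
  have h1 := hca.comp (x + u) y
  simp only [add_mul, map_add, LinearMap.add_apply] at h1
  linear_combination (h1 - hca.symm (u*y) (x*y) + Bf y y * hca.symm u x) / 2
    - hca.comp x y / 2 - hca.comp u y / 2

lemma fullL (hca : IsCompAlg Bf) (a x y v : K) :
    Bf (a * y) (x * v) + Bf (x * y) (a * v) = 2 * Bf a x * Bf y v := by
  have h1 := p1 Bf hca (a + x) y v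
  simp only [add_mul, map_add, LinearMap.add_apply] at h1
  linear_combination h1 - p1 Bf hca a y v - p1 Bf hca x y v + Bf y v * hca.symm x a

lemma fullR (hca : IsCompAlg Bf) (x u y v : K) :
    Bf (x * y) (u * v) + Bf (x * v) (u * y) = 2 * Bf x u * Bf y v := by
  have h1 := p2 Bf hca x u (y + v)
  simp only [mul_add, map_add, LinearMap.add_apply] at h1
  linear_combination h1 - p2 Bf hca x u y - p2 Bf hca x u v + Bf x u * hca.symm v y

lemma adjL (hca : IsCompAlg Bf) (a x y : K) :
    Bf (a * x) y + Bf x (a * y) = 2 * Bf a 1 * Bf x y := by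
  have h := fullL Bf hca a 1 x y
  simpa only [one_mul] using h

lemma adjR (hca : IsCompAlg Bf) (a x y : K) :
    Bf (x * a) y + Bf x (y * a) = 2 * Bf a 1 * Bf x y := by
  have h := fullR Bf hca x y 1 a
  simp only [mul_one, one_mul] at h
  linear_combination h + 2 * Bf x y * hca.symm 1 a

lemma sqK (hca : IsCompAlg Bf) (x : K) :
    x * x = (2 * Bf x 1) • x - Bf x x • (1 : K) := by
  rw [← sub_eq_zero]
  apply hca.nondeg
  intro z
  have h1 := adjL Bf hca x x z
  have h2 := p1 Bf hca x 1 z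
  rw [mul_one] at h2
  simp only [map_sub, map_smul, LinearMap.sub_apply, LinearMap.smul_apply, smul_eq_mul]
  linear_combination h1 - h2

lemma lmm (hca : IsCompAlg Bf) (x y : K) :
    x * (x * y) = (2 * Bf x 1) • (x * y) - Bf x x • y := by
  rw [← sub_eq_zero]
  apply hca.nondeg
  intro z
  have h1 := adjL Bf hca x (x * y) z
  have h2 := p1 Bf hca x y z
  simp only [map_sub, map_smul, LinearMap.sub_apply, LinearMap.smul_apply, smul_eq_mul]
  linear_combination h1 - h2

lemma rmm (hca : IsCompAlg Bf) (x y : K) :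
    (y * x) * x = (2 * Bf x 1) • (y * x) - Bf x x • y := by
  rw [← sub_eq_zero]
  apply hca.nondeg
  intro z
  have h1 := adjR Bf hca x (y * x) z
  have h2 := p2 Bf hca y z x
  simp only [map_sub, map_smul, LinearMap.sub_apply, LinearMap.smul_apply, smul_eq_mul]
  linear_combination h1 - h2

lemma lalt (hca : IsCompAlg Bf) (x y : K) : x * (x * y) = (x * x) * y := by
  rw [lmm Bf hca, sqK Bf hca, sub_mul, smul_mul_assoc, smul_mul_assoc, one_mul]

lemma ralt (hca : IsCompAlg Bf) (x y : K) : (y * x) * x = y * (x * x) := by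
  rw [rmm Bf hca, sqK Bf hca, mul_sub, mul_smul_comm, mul_smul_comm, mul_one]

lemma lin1 (hca : IsCompAlg Bf) (a x y : K) :
    a * (x * y) + x * (a * y) = (a * x) * y + (x * a) * y := by
  have h1 := lalt Bf hca (a + x) y
  have h2 := lalt Bf hca a y
  have h3 := lalt Bf hca x y
  have h4 : a * (x * y) + x * (a * y)
      = (a + x) * ((a + x) * y) - a * (a * y) - x * (x * y) := by
    simp only [add_mul, mul_add]; abel
  have h5 : (a * x) * y + (x * a) * y
      = ((a + x) * (a + x)) * y - (a * a) * y - (x * x) * y := by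
    simp only [add_mul, mul_add]; abel
  rw [h4, h5, h1, h2, h3]

lemma lin2 (hca : IsCompAlg Bf) (b x y : K) :
    (x * y) * b + (x * b) * y = x * (y * b) + x * (b * y) := by
  have h1 := ralt Bf hca (y + b) x
  have h2 := ralt Bf hca y x
  have h3 := ralt Bf hca b x
  have h4 : (x * y) * b + (x * b) * y
      = (x * (y + b)) * (y + b) - (x * y) * y - (x * b) * b := by
    simp only [add_mul, mul_add]; abel
  have h5 : x * (y * b) + x * (b * y)
      = x * ((y + b) * (y + b)) - x * (y * y) - x * (b * b) := by
    simp only [add_mul, mul_add]; abel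
  rw [h4, h5, h1, h2, h3]

lemma derK_one (D : K →ₗ[ℝ] K) (hD : IsDerK D) : D 1 = 0 := by
  have h := hD 1 1
  rw [mul_one, mul_one, one_mul] at h
  nth_rewrite 1 [← add_zero (D 1)] at h
  exact (add_left_cancel h).symm

lemma der_skw (hca : IsCompAlg Bf) (D : K →ₗ[ℝ] K) (hD : IsDerK D) : Skw Bf D := by
  have hD1 : D 1 = 0 := derK_one D hD
  -- the square relation under D
  have hrel : ∀ x : K, D x * x + x * D x = (2 * Bf x 1) • D x := by
    intro x
    calc D x * x + x * D x = D (x * x) := (hD x x).symm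
      _ = D ((2 * Bf x 1) • x - Bf x x • (1 : K)) := by rw [← sqK Bf hca]
      _ = (2 * Bf x 1) • D x - Bf x x • D 1 := by rw [map_sub, map_smul, map_smul]
      _ = (2 * Bf x 1) • D x := by rw [hD1, smul_zero, sub_zero]
  -- step A : Bf (D x) x = Bf x 1 * Bf (D x) 1
  have stepA : ∀ x : K, Bf (D x) x = Bf x 1 * Bf (D x) 1 := by
    intro x
    have h1 := congrArg (fun w => Bf w 1) (hrel x)
    simp only [map_add, map_smul, LinearMap.add_apply, LinearMap.smul_apply, smul_eq_mul] at h1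
    have h2 := adjL Bf hca x (D x) 1
    rw [mul_one] at h2
    have h3 := adjR Bf hca x (D x) 1
    rw [one_mul] at h3
    linear_combination (h2 + h3 - h1) / 2
  -- polarized step A
  have stepS : ∀ x y : K, Bf (D x) y + Bf x (D y)
      = Bf x 1 * Bf (D y) 1 + Bf y 1 * Bf (D x) 1 := by
    intro x y
    have h := stepA (x + y)
    simp only [map_add, LinearMap.add_apply] at h
    linear_combination h - stepA x - stepA y - hca.symm (D y) x
  by_cases htriv : ∀ u : K, u = 0
  · intro x y; rw [htriv x, htriv y]; simp
  push_neg at htriv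
  obtain ⟨u0, hu0⟩ := htriv
  -- Bf 1 1 = 1
  have he : Bf (1 : K) 1 = 1 := by
    have h11 := hca.comp 1 1
    rw [mul_one] at h11
    have h0 : Bf (1 : K) 1 * (Bf (1 : K) 1 - 1) = 0 := by linear_combination -h11
    rcases mul_eq_zero.mp h0 with h | h
    · exfalso
      apply hu0
      apply hca.nondeg
      intro z
      have hnn : ∀ y : K, Bf y y = 0 := by
        intro y
        have := hca.comp y 1
        rw [mul_one, h, mul_zero] at this
        exact this
      have h1 := hnn (u0 + z)
      simp only [map_add, LinearMap.add_apply] at h1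
      linear_combination (h1 - hnn u0 - hnn z - hca.symm z u0) / 2
    · linarith [h]
  -- star0
  have star0 : ∀ x : K, Bf x 1 * (Bf (D x) 1 * (Bf x x - Bf x 1 ^ 2)) = 0 := by
    intro x
    have w1 : Bf (D (x * x)) (x * x) = 2 * Bf x x * Bf (D x) x := by
      rw [hD x x]
      simp only [map_add, LinearMap.add_apply]
      have a1 := p2 Bf hca (D x) x x
      have a2 := p1 Bf hca x (D x) x
      linear_combination a1 + a2
    have w2 : Bf (D (x * x)) (x * x)
        = (2 * Bf x 1) * (2 * Bf x 1 * Bf (D x) x - Bf x x * Bf (D x) 1) := by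
      have hd2 : D (x * x) = (2 * Bf x 1) • D x := by
        rw [hD x x]; exact hrel x
      rw [hd2, sqK Bf hca x]
      simp only [map_sub, map_smul, LinearMap.smul_apply, smul_eq_mul]
      ring
    linear_combination (w2 - w1) / 4 + (Bf x 1 ^ 2 - Bf x x / 2) * stepA x
  -- star : eliminate the Bf x 1 factor
  have star : ∀ x : K, Bf (D x) 1 * (Bf x x - Bf x 1 ^ 2) = 0 := by
    intro x
    have h := star0 (x + (1 - Bf x 1) • (1 : K))
    simp only [map_add, map_smul, LinearMap.add_apply, LinearMap.smul_apply, smul_eq_mul,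
      hD1, smul_zero, add_zero, he, hca.symm 1 x] at h
    linear_combination h
  -- sigma = 0
  have sigma0 : ∀ x : K, Bf (D x) 1 = 0 := by
    by_contra hc
    push_neg at hc
    obtain ⟨x0, hx0⟩ := hc
    have gzero : ∀ y : K, Bf y y - Bf y 1 ^ 2 = 0 := by
      intro y
      by_cases hy : Bf (D y) 1 = 0
      · have hs : ∀ z : K, Bf (D (x0 + z)) 1 = Bf (D x0) 1 + Bf (D z) 1 := by
          intro z; simp [map_add]
        have h1 := star (x0 + y)
        have h2 := star (x0 - y)
        have h0 := (mul_eq_zero.mp (star x0)).resolve_left hx0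
        rw [hs y, hy, add_zero] at h1
        have h2' : Bf (D (x0 - y)) 1 = Bf (D x0) 1 := by
          simp [map_sub, hy]
        rw [h2'] at h2
        have g1 := (mul_eq_zero.mp h1).resolve_left hx0
        have g2 := (mul_eq_zero.mp h2).resolve_left hx0
        simp only [map_add, map_sub, LinearMap.add_apply, LinearMap.sub_apply] at g1 g2
        linear_combination (g1 + g2 - 2 * h0) / 2
      · exact (mul_eq_zero.mp (star y)).resolve_left hy
    have hfac : ∀ y z : K, Bf y z = Bf y 1 * Bf z 1 := by
      intro y z
      have h := gzero (y + z)
      simp only [map_add, LinearMap.add_apply] at h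
      linear_combination (h - gzero y - gzero z - hca.symm z y) / 2
    have hy1 : ∀ y : K, y = Bf y 1 • (1 : K) := by
      intro y
      rw [← sub_eq_zero]
      apply hca.nondeg
      intro z
      simp only [map_sub, map_smul, LinearMap.sub_apply, LinearMap.smul_apply, smul_eq_mul]
      linear_combination hfac y z - Bf y 1 * hfac 1 z - Bf y 1 * Bf z 1 * he
    apply hx0
    have : D x0 = 0 := by
      rw [hy1 x0, map_smul, hD1, smul_zero]
    rw [this, map_zero, LinearMap.zero_apply]
  intro x y
  have := stepS x y
  rw [sigma0 x, sigma0 y] at this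
  simpa using this

end AuxCompAlg

/-- The map `T(D,a,b) = (D + L_a - R_b, D - L_a - L_b - R_b, D + L_a + R_a + R_b)` is an
ℝ-linear bijection from `Der K × K′ × K′` onto `Tri K`: it lands in `Tri K`, and every
element of `Tri K` has a unique preimage `(D,a,b)` with `D ∈ Der K` and `a, b ∈ K′`. -/
theorem statement3 [FiniteDimensional ℝ K]
    (Bf : K →ₗ[ℝ] K →ₗ[ℝ] ℝ) (hca : IsCompAlg Bf) :
    (∀ (D : K →ₗ[ℝ] K) (a b : K), IsDerK D → Bf a 1 = 0 → Bf b 1 = 0 →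
      InTri Bf (D + Lm a - Rm b, D - Lm a - Lm b - Rm b, D + Lm a + Rm a + Rm b))
    ∧ (∀ T : (K →ₗ[ℝ] K) × (K →ₗ[ℝ] K) × (K →ₗ[ℝ] K), InTri Bf T →
        ∃! p : (K →ₗ[ℝ] K) × K × K,
          (IsDerK p.1 ∧ Bf p.2.1 1 = 0 ∧ Bf p.2.2 1 = 0) ∧
          T = (p.1 + Lm p.2.1 - Rm p.2.2,
               p.1 - Lm p.2.1 - Lm p.2.2 - Rm p.2.2,
               p.1 + Lm p.2.1 + Rm p.2.1 + Rm p.2.2)) := by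
  constructor
  · intro D a b hD ha hb
    have hsk := der_skw Bf hca D hD
    refine ⟨?_, ?_, ?_, ?_⟩
    · intro x y
      simp only [LinearMap.add_apply, LinearMap.sub_apply, Lm, Rm,
        LinearMap.mulLeft_apply, LinearMap.mulRight_apply, map_add, map_sub,
        LinearMap.add_apply, LinearMap.sub_apply]
      linear_combination hsk x y + adjL Bf hca a x y - adjR Bf hca b x y
        + 2 * Bf x y * ha - 2 * Bf x y * hb
    · intro x y
      simp only [LinearMap.add_apply, LinearMap.sub_apply, Lm, Rm,
        LinearMap.mulLeft_apply, LinearMap.mulRight_apply, map_add, map_sub,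
        LinearMap.add_apply, LinearMap.sub_apply]
      linear_combination hsk x y - adjL Bf hca a x y - adjL Bf hca b x y
        - adjR Bf hca b x y - 2 * Bf x y * ha - 4 * Bf x y * hb
    · intro x y
      simp only [LinearMap.add_apply, LinearMap.sub_apply, Lm, Rm,
        LinearMap.mulLeft_apply, LinearMap.mulRight_apply, map_add, map_sub,
        LinearMap.add_apply, LinearMap.sub_apply]
      linear_combination hsk x y + adjL Bf hca a x y + adjR Bf hca a x y
        + adjR Bf hca b x y + 4 * Bf x y * ha + 2 * Bf x y * hb
    · intro x y
      simp only [LinearMap.add_apply, LinearMap.sub_apply, Lm, Rm,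
        LinearMap.mulLeft_apply, LinearMap.mulRight_apply]
      rw [hD x y]
      have l1 := lin1 Bf hca a x y
      have l2 := lin2 Bf hca b x y
      have key : (D x * y + x * D y + a * (x * y) - (x * y) * b)
          - (x * (D y - a * y - b * y - y * b) + (D x + a * x + x * a + x * b) * y)
          = ((a * (x * y) + x * (a * y)) - ((a * x) * y + (x * a) * y))
            + ((x * (y * b) + x * (b * y)) - ((x * y) * b + (x * b) * y)) := by
        simp only [mul_sub, sub_mul, mul_add, add_mul]
        abel
      exact sub_eq_zero.mp (key.trans (by rw [l1, l2]; abel))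
  · rintro ⟨A, B, C⟩ ⟨hA, hB, hC, htri⟩
    have hb1 : Bf (B 1) 1 = 0 := by
      have h := hB 1 1
      have h2 := hca.symm 1 (B 1)
      linarith
    have hc1 : Bf (C 1) 1 = 0 := by
      have h := hC 1 1
      have h2 := hca.symm 1 (C 1)
      linarith
    set a : K := (2/3 : ℝ) • C 1 + (1/3 : ℝ) • B 1 with ha_def
    set b : K := -((1/3 : ℝ) • C 1 + (2/3 : ℝ) • B 1) with hb_def
    have hCa : C 1 = a + a + b := by rw [ha_def, hb_def]; module
    have hBb : B 1 = -(a + b + b) := by rw [ha_def, hb_def]; module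
    have hBy : ∀ y, B y = A y - C 1 * y := by
      intro y
      have h := htri 1 y
      rw [one_mul, one_mul] at h
      rw [h]; abel
    have hCx : ∀ x, C x = A x - x * B 1 := by
      intro x
      have h := htri x 1
      rw [mul_one, mul_one] at h
      rw [h]; abel
    have ha1 : Bf a 1 = 0 := by
      rw [ha_def]
      simp only [map_add, map_smul, LinearMap.add_apply, LinearMap.smul_apply,
        smul_eq_mul, hb1, hc1, mul_zero, add_zero]
    have hbb1 : Bf b 1 = 0 := by
      rw [hb_def]
      simp only [map_neg, map_add, map_smul, LinearMap.neg_apply, LinearMap.add_apply,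
        LinearMap.smul_apply, smul_eq_mul, hb1, hc1, mul_zero, add_zero, neg_zero]
    set D : K →ₗ[ℝ] K := A - Lm a + Rm b with hD_def
    have hDder : IsDerK D := by
      intro x y
      have hA' := htri x y
      rw [hBy y, hCx x, hCa, hBb] at hA'
      have l1 := lin1 Bf hca a x y
      have l2 := lin2 Bf hca b x y
      simp only [hD_def, LinearMap.sub_apply, LinearMap.add_apply, Lm, Rm,
        LinearMap.mulLeft_apply, LinearMap.mulRight_apply]
      rw [hA']
      have key : (x * (A y - (a + a + b) * y) + (A x - x * -(a + b + b)) * y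
            - a * (x * y) + (x * y) * b)
          - ((A x - a * x + x * b) * y + x * (A y - a * y + y * b))
          = (((a * x) * y + (x * a) * y) - (a * (x * y) + x * (a * y)))
            + (((x * y) * b + (x * b) * y) - (x * (y * b) + x * (b * y))) := by
        simp only [mul_sub, sub_mul, mul_add, add_mul, mul_neg, neg_add, neg_mul]
        abel
      exact sub_eq_zero.mp (key.trans (by rw [l1, l2]; abel))
    have comp1 : A = D + Lm a - Rm b := by rw [hD_def]; abel
    have comp2 : B = D - Lm a - Lm b - Rm b := by
      have hmid : B = A - Lm a - Lm a - Lm b := by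
        apply LinearMap.ext
        intro y
        simp only [LinearMap.sub_apply, Lm, LinearMap.mulLeft_apply]
        rw [hBy y, hCa]
        simp only [add_mul]
        abel
      rw [hmid, hD_def]; abel
    have comp3 : C = D + Lm a + Rm a + Rm b := by
      have hmid : C = A + Rm a + Rm b + Rm b := by
        apply LinearMap.ext
        intro x
        simp only [LinearMap.add_apply, Rm, LinearMap.mulRight_apply]
        rw [hCx x, hBb]
        simp only [mul_neg, mul_add]
        abel
      rw [hmid, hD_def]; abel
    refine ⟨⟨D, a, b⟩, ⟨⟨hDder, ha1, hbb1⟩, ?_⟩, ?_⟩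
    · simp only [Prod.mk.injEq]
      exact ⟨comp1, comp2, comp3⟩
    · rintro ⟨D', a', b'⟩ ⟨⟨hd', ha', hb'⟩, heq⟩
      simp only [Prod.mk.injEq] at heq
      obtain ⟨e1, e2, e3⟩ := heq
      have h12 : Lm a + Lm a + Lm b = Lm a' + Lm a' + Lm b' := by
        calc Lm a + Lm a + Lm b = A - B := by rw [comp1, comp2]; abel
          _ = Lm a' + Lm a' + Lm b' := by rw [e1, e2]; abel
      have h13 : Rm a + Rm b + Rm b = Rm a' + Rm b' + Rm b' := by
        calc Rm a + Rm b + Rm b = C - A := by rw [comp1, comp3]; abel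
          _ = Rm a' + Rm b' + Rm b' := by rw [e1, e3]; abel
      have eL : a + a + b = a' + a' + b' := by
        have := LinearMap.congr_fun h12 1
        simpa only [LinearMap.add_apply, Lm, LinearMap.mulLeft_apply, mul_one] using this
      have eR : a + b + b = a' + b' + b' := by
        have := LinearMap.congr_fun h13 1
        simpa only [LinearMap.add_apply, Rm, LinearMap.mulRight_apply, one_mul] using this
      have hbb : b' = b := by
        have h3 : b + b + b = b' + b' + b' := by
          calc b + b + b = (a + b + b) + (a + b + b) - (a + a + b) := by abel
            _ = (a' + b' + b') + (a' + b' + b') - (a' + a' + b') := by rw [eR, eL]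
            _ = b' + b' + b' := by abel
        have h4 : (3 : ℝ) • b' = (3 : ℝ) • b := by
          have e5 : (3 : ℝ) • b = b + b + b := by module
          have e6 : (3 : ℝ) • b' = b' + b' + b' := by module
          rw [e5, e6, h3]
        calc b' = (3⁻¹ : ℝ) • ((3 : ℝ) • b') := by
              rw [inv_smul_smul₀ (by norm_num : (3:ℝ) ≠ 0)]
          _ = (3⁻¹ : ℝ) • ((3 : ℝ) • b) := by rw [h4]
          _ = b := by rw [inv_smul_smul₀ (by norm_num : (3:ℝ) ≠ 0)]
      have haa : a' = a := by
        have h3 : a + a + a = a' + a' + a' := by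
          calc a + a + a = (a + a + b) + (a + a + b) - (a + b + b) := by abel
            _ = (a' + a' + b') + (a' + a' + b') - (a' + b' + b') := by rw [eL, eR]
            _ = a' + a' + a' := by abel
        have h4 : (3 : ℝ) • a' = (3 : ℝ) • a := by
          have e5 : (3 : ℝ) • a = a + a + a := by module
          have e6 : (3 : ℝ) • a' = a' + a' + a' := by module
          rw [e5, e6, h3]
        calc a' = (3⁻¹ : ℝ) • ((3 : ℝ) • a') := by
              rw [inv_smul_smul₀ (by norm_num : (3:ℝ) ≠ 0)]
          _ = (3⁻¹ : ℝ) • ((3 : ℝ) • a) := by rw [h4]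
          _ = a := by rw [inv_smul_smul₀ (by norm_num : (3:ℝ) ≠ 0)]
      have hdd : D' = D := by
        have h5 : D' + Lm a - Rm b = D + Lm a - Rm b := by
          rw [← haa, ← hbb, ← e1, comp1, haa, hbb]
        rwa [sub_left_inj, add_left_inj] at h5
      simp only [Prod.mk.injEq]
      exact ⟨hdd, haa, hbb⟩
end

section
/- Let K be a real composition algebra and let κ : K → K denote its conjugation x ↦ x̄. For an ℝ-linear map A : K → K write Ā := κ∘A∘κ. If (A,B,C) belongs to the triality algebra Tri K, then θ(A,B,C) := (B̄, C, Ā) also belongs to Tri K; moreover θ is an automorphism of the Lie algebra Tri K, i.e. θ is a linear bijection of Tri K and θ[T,T′] = [θT, θT′] for all T,T′ ∈ Tri K (brackets taken componentwise). -/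
/-! Basic notions for a real composition algebra `K`, presented via the symmetric
bilinear form `Bf` obtained by polarizing the multiplicative quadratic form
(`N x = Bf x x` and `⟨x,y⟩ = Bf x y`). -/

variable {K : Type*} [NonAssocRing K] [Module ℝ K]
  [SMulCommClass ℝ K K] [IsScalarTower ℝ K K]

/-- The conjugation of `K` as a real-linear map. -/
def kappaL (Bf : K →ₗ[ℝ] K →ₗ[ℝ] ℝ) : K →ₗ[ℝ] K :=
  (2 : ℝ) • (Bf.flip 1).smulRight (1 : K) - LinearMap.id

/-- `Ā = κ ∘ A ∘ κ`. -/
def cbar (Bf : K →ₗ[ℝ] K →ₗ[ℝ] ℝ) (A : K →ₗ[ℝ] K) : K →ₗ[ℝ] K :=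
  kappaL Bf ∘ₗ A ∘ₗ kappaL Bf

/-- `θ(A,B,C) = (B̄, C, Ā)`. -/
def thetaT (Bf : K →ₗ[ℝ] K →ₗ[ℝ] ℝ)
    (T : (K →ₗ[ℝ] K) × (K →ₗ[ℝ] K) × (K →ₗ[ℝ] K)) :
    (K →ₗ[ℝ] K) × (K →ₗ[ℝ] K) × (K →ₗ[ℝ] K) :=
  (cbar Bf T.2.1, T.2.2, cbar Bf T.1)

/-- The componentwise commutator bracket on triples of endomorphisms. -/
def brT {K : Type*} [NonAssocRing K] [Module ℝ K]
    [SMulCommClass ℝ K K] [IsScalarTower ℝ K K]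
    (T T' : (K →ₗ[ℝ] K) × (K →ₗ[ℝ] K) × (K →ₗ[ℝ] K)) :
    (K →ₗ[ℝ] K) × (K →ₗ[ℝ] K) × (K →ₗ[ℝ] K) :=
  (T.1 ∘ₗ T'.1 - T'.1 ∘ₗ T.1,
   T.2.1 ∘ₗ T'.2.1 - T'.2.1 ∘ₗ T.2.1,
   T.2.2 ∘ₗ T'.2.2 - T'.2.2 ∘ₗ T.2.2)

variable {Bf : K →ₗ[ℝ] K →ₗ[ℝ] ℝ}

lemma eq_of_bf (hca : IsCompAlg Bf) {a b : K} (h : ∀ z, Bf a z = Bf b z) : a = b := by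
  have := hca.nondeg (a - b) (fun z => by simp [map_sub, h z, LinearMap.sub_apply])
  exact sub_eq_zero.mp this

lemma polR (hca : IsCompAlg Bf) (x y z : K) : Bf (x*y) (x*z) = Bf x x * Bf y z := by
  have h := hca.comp x (y+z)
  have h1 := hca.comp x y
  have h2 := hca.comp x z
  have hs := hca.symm (x*y) (x*z)
  have hs2 := hca.symm y z
  simp only [mul_add, map_add, LinearMap.add_apply] at h
  linear_combination h/2 - h1/2 - h2/2 + hs/2 - (Bf x x)/2 * hs2

lemma polL (hca : IsCompAlg Bf) (x y z : K) : Bf (x*z) (y*z) = Bf x y * Bf z z := by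
  have h := hca.comp (x+y) z
  have h1 := hca.comp x z
  have h2 := hca.comp y z
  have hs := hca.symm (x*z) (y*z)
  have hs2 := hca.symm x y
  simp only [add_mul, map_add, LinearMap.add_apply] at h
  linear_combination h/2 - h1/2 - h2/2 + hs/2 - (Bf z z)/2 * hs2

lemma exch1 (hca : IsCompAlg Bf) (x w y z : K) :
    Bf (x*y) (w*z) + Bf (w*y) (x*z) = 2 * Bf x w * Bf y z := by
  have h := polR hca (x+w) y z
  have h1 := polR hca x y z
  have h2 := polR hca w y z
  have hs := hca.symm x w
  simp only [add_mul, map_add, LinearMap.add_apply] at h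
  linear_combination h - h1 - h2 - (Bf y z) * hs

lemma exch2 (hca : IsCompAlg Bf) (x y z w : K) :
    Bf (x*z) (y*w) + Bf (x*w) (y*z) = 2 * Bf x y * Bf z w := by
  have h := polL hca x y (z+w)
  have h1 := polL hca x y z
  have h2 := polL hca x y w
  have hs := hca.symm z w
  simp only [mul_add, map_add, LinearMap.add_apply] at h
  linear_combination h - h1 - h2 - (Bf x y) * hs

lemma kappaL_apply (Bf : K →ₗ[ℝ] K →ₗ[ℝ] ℝ) (x : K) :
    kappaL Bf x = (2 * Bf x 1) • (1 : K) - x := by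
  rw [mul_smul]
  simp [kappaL, LinearMap.sub_apply, LinearMap.smul_apply, LinearMap.smulRight_apply,
    LinearMap.flip_apply]

lemma B11 (hca : IsCompAlg Bf) (h1 : (1:K) ≠ 0) : Bf 1 1 = 1 := by
  obtain ⟨z, hz⟩ : ∃ z, Bf (1:K) z ≠ 0 := by
    by_contra h
    push_neg at h
    exact h1 (hca.nondeg 1 h)
  have := polR hca 1 1 z
  simp only [one_mul] at this
  have h2 : Bf (1:K) z * (Bf (1:K) 1 - 1) = 0 := by ring_nf; linarith [this]
  rcases mul_eq_zero.mp h2 with h | h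
  · exact absurd h hz
  · linarith

lemma adj1 (hca : IsCompAlg Bf) (x y z : K) :
    Bf (x*y) z = Bf y (conjK Bf x * z) := by
  have h := exch1 hca x 1 y z
  have : conjK Bf x * z = (2 * Bf x 1) • z - x * z := by
    simp [conjK, sub_mul, smul_mul_assoc]
  rw [this]
  simp only [map_sub, map_smul, smul_eq_mul, LinearMap.sub_apply, LinearMap.smul_apply,
    one_mul] at *
  linear_combination h

lemma adj2 (hca : IsCompAlg Bf) (x y z : K) :
    Bf (x*y) z = Bf x (z * conjK Bf y) := by
  have h := exch2 hca x z y 1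
  have : z * conjK Bf y = (2 * Bf y 1) • z - z * y := by
    simp [conjK, mul_sub, mul_smul_comm]
  rw [this]
  simp only [map_sub, map_smul, smul_eq_mul, LinearMap.sub_apply, LinearMap.smul_apply,
    mul_one, one_mul] at *
  linear_combination h

lemma kappa_selfadj (hca : IsCompAlg Bf) (x y : K) :
    Bf (kappaL Bf x) y = Bf x (kappaL Bf y) := by
  rw [kappaL_apply, kappaL_apply]
  simp only [map_sub, map_smul, smul_eq_mul, LinearMap.sub_apply, LinearMap.smul_apply]
  linear_combination 2 * Bf y 1 * hca.symm x 1 + (2 * Bf x 1) * hca.symm 1 y - hca.symm x y + 2*Bf y 1 * hca.symm (1:K) x + hca.symm x y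

lemma kappa_invol (hca : IsCompAlg Bf) (h1 : (1:K) ≠ 0) (x : K) :
    kappaL Bf (kappaL Bf x) = x := by
  rw [kappaL_apply, kappaL_apply]
  have hb := B11 hca h1
  simp only [map_sub, map_smul, LinearMap.sub_apply, LinearMap.smul_apply, smul_eq_mul, hb,
    mul_one]
  have h2 : (2 * (2 * Bf x 1 - Bf x 1)) = 2 * Bf x 1 := by ring
  rw [h2]
  abel

lemma kappa_mul (hca : IsCompAlg Bf) (x y : K) :
    kappaL Bf (x * y) = kappaL Bf y * kappaL Bf x := by
  apply eq_of_bf hca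
  intro z
  rw [kappaL_apply, kappaL_apply, kappaL_apply]
  have expand : ((2 * Bf y 1) • (1:K) - y) * ((2 * Bf x 1) • (1:K) - x)
      = (2 * Bf y 1 * (2 * Bf x 1)) • (1:K) - (2 * Bf y 1) • x - (2 * Bf x 1) • y + y * x := by
    simp only [sub_mul, mul_sub, smul_mul_assoc, mul_smul_comm, one_mul, mul_one]
    module
  rw [expand]
  simp only [map_sub, map_add, map_smul, LinearMap.sub_apply, LinearMap.add_apply,
    LinearMap.smul_apply, smul_eq_mul]
  have e1 := exch1 hca x 1 y z
  have e2 := exch1 hca y 1 x z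
  have e4 := exch1 hca y x 1 z
  simp only [one_mul, mul_one] at e1 e2 e4
  have key : Bf (x*y) z + Bf (y*x) z
      = 2 * Bf x 1 * Bf y z + 2 * Bf y 1 * Bf x z - 2 * Bf x y * Bf 1 z := by
    linear_combination e1 + e2 - e4 + 2 * Bf (1:K) z * hca.symm x y
  have e5 := adj2 hca x y 1
  rw [one_mul] at e5
  have e7 : Bf x (conjK Bf y) = 2 * Bf y 1 * Bf x 1 - Bf x y := by
    simp only [conjK, map_sub, map_smul, LinearMap.sub_apply, LinearMap.smul_apply, smul_eq_mul]
    try ring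
  have hxy1 : Bf (x*y) 1 = 2 * Bf y 1 * Bf x 1 - Bf x y := by rw [e5, e7]
  linear_combination 2 * Bf (1:K) z * hxy1 - key

lemma adj1k (hca : IsCompAlg Bf) (x y z : K) :
    Bf (x*y) z = Bf y (kappaL Bf x * z) := by rw [adj1 hca, kappaL_apply]; rfl

lemma adj2k (hca : IsCompAlg Bf) (x y z : K) :
    Bf (x*y) z = Bf x (z * kappaL Bf y) := by rw [adj2 hca, kappaL_apply]; rfl

lemma skw_cbar (hca : IsCompAlg Bf) {A : K →ₗ[ℝ] K} (hA : Skw Bf A) :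
    Skw Bf (cbar Bf A) := by
  intro x y
  simp only [cbar, LinearMap.comp_apply]
  rw [kappa_selfadj hca, ← kappa_selfadj hca x]
  exact hA _ _

lemma cbar_invol (hca : IsCompAlg Bf) (h1 : (1:K) ≠ 0) (A : K →ₗ[ℝ] K) :
    cbar Bf (cbar Bf A) = A := by
  ext x
  simp only [cbar, LinearMap.comp_apply, kappa_invol hca h1]

lemma cbar_comp (hca : IsCompAlg Bf) (h1 : (1:K) ≠ 0) (A B : K →ₗ[ℝ] K) :
    cbar Bf (A ∘ₗ B) = cbar Bf A ∘ₗ cbar Bf B := by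
  ext x
  simp only [cbar, LinearMap.comp_apply, kappa_invol hca h1]

lemma cbar_sub (A B : K →ₗ[ℝ] K) :
    cbar Bf (A - B) = cbar Bf A - cbar Bf B := by
  ext x
  simp only [cbar, LinearMap.comp_apply, LinearMap.sub_apply, map_sub]

lemma trishift (hca : IsCompAlg Bf) (h1 : (1:K) ≠ 0) {A B C : K →ₗ[ℝ] K}
    (hA : Skw Bf A) (hB : Skw Bf B) (hC : Skw Bf C)
    (hT : ∀ x y : K, A (x * y) = x * B y + C x * y) (x y : K) :
    cbar Bf B (x * y) = x * C y + cbar Bf A x * y := by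
  apply eq_of_bf hca
  intro z
  simp only [cbar, LinearMap.comp_apply, map_add, LinearMap.add_apply]
  rw [kappa_mul hca x y, kappa_selfadj hca, adj1k hca x (C y) z,
    adj2k hca (kappaL Bf (A (kappaL Bf x))) y z, kappa_selfadj hca,
    kappa_mul hca z (kappaL Bf y), kappa_invol hca h1]
  have h2' := hB (kappaL Bf y * kappaL Bf x) (kappaL Bf z)
  have h9' := hA (kappaL Bf x) (y * kappaL Bf z)
  rw [hT y (kappaL Bf z)] at h9'
  simp only [map_add, LinearMap.add_apply] at h9'
  have h11 : Bf (kappaL Bf y * kappaL Bf x) (B (kappaL Bf z))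
      = Bf (kappaL Bf x) (y * B (kappaL Bf z)) := by
    rw [adj1k hca, kappa_invol hca h1]
  have h12 : Bf (kappaL Bf x * z) (C y) = Bf (kappaL Bf x) (C y * kappaL Bf z) :=
    adj2k hca _ z _
  have h5' := hC y (kappaL Bf x * z)
  have h13 := hC (kappaL Bf x * z) y
  have hsy := hca.symm y (C (kappaL Bf x * z))
  linear_combination h2' - h11 - h9' - h12 - h5' + hsy + h13
/-- `θ(A,B,C) = (B̄,C,Ā)` maps `Tri K` to itself, is a bijection of `Tri K`, and
preserves the (componentwise) Lie bracket on `Tri K`: it is a Lie algebra automorphism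
of the triality algebra. -/
theorem statement5 [FiniteDimensional ℝ K]
    (Bf : K →ₗ[ℝ] K →ₗ[ℝ] ℝ) (hca : IsCompAlg Bf) :
    (∀ T, InTri Bf T → InTri Bf (thetaT Bf T))
    ∧ (∀ T, InTri Bf T → ∃! S, InTri Bf S ∧ thetaT Bf S = T)
    ∧ (∀ T T', InTri Bf T → InTri Bf T' →
        thetaT Bf (brT T T') = brT (thetaT Bf T) (thetaT Bf T')) := by
  by_cases h1 : (1:K) = 0
  · haveI : Subsingleton K := subsingleton_of_zero_eq_one h1.symm
    have hz : ∀ (a b : K), Bf a b = 0 := fun a b => by rw [Subsingleton.elim a 0]; simp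
    have hall : ∀ T, InTri Bf T := by
      intro T
      exact ⟨fun x y => by rw [hz, hz]; ring, fun x y => by rw [hz, hz]; ring,
        fun x y => by rw [hz, hz]; ring, fun x y => Subsingleton.elim _ _⟩
    refine ⟨fun T _ => hall _, fun T hT => ⟨T, ⟨hall _, Subsingleton.elim _ _⟩,
      fun S' _ => Subsingleton.elim _ _⟩, fun T T' _ _ => Subsingleton.elim _ _⟩
  · have part1 : ∀ T, InTri Bf T → InTri Bf (thetaT Bf T) := by
      rintro ⟨A, B, C⟩ ⟨hA, hB, hC, hrel⟩
      exact ⟨skw_cbar hca hB, hC, skw_cbar hca hA, trishift hca h1 hA hB hC hrel⟩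
    have theta3 : ∀ T, thetaT Bf (thetaT Bf (thetaT Bf T)) = T := by
      intro T
      simp [thetaT, cbar_invol hca h1]
    refine ⟨part1, fun T hT => ?_, fun T T' _ _ => ?_⟩
    · refine ⟨thetaT Bf (thetaT Bf T), ⟨part1 _ (part1 _ hT), theta3 T⟩, ?_⟩
      rintro S' ⟨-, hS'⟩
      rw [← hS']
      exact (theta3 S').symm
    · simp only [thetaT, brT, cbar_sub, cbar_comp hca h1]
end

section
/- Let A be a (not necessarily associative) ℝ-algebra whose associator [x,y,z] := (x*y)*z − x*(y*z) is an alternating function of its three arguments. Then for all x,y,z ∈ A the operator D_{x,y} := [L_x,L_y] + [L_x,R_y] + [R_x,R_y] satisfies D_{x,y}(z) = [[x,y],z] − 3·[x,y,z], where [x,y] = x*y − y*x. -/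
/-- In a (not necessarily associative) real algebra whose associator is alternating,
`D_{x,y} z = [[x,y],z] - 3[x,y,z]`, where `D_{x,y} = [L_x,L_y] + [L_x,R_y] + [R_x,R_y]`. -/
theorem statement6 (A : Type*) [NonAssocRing A] [Module ℝ A]
    [SMulCommClass ℝ A A] [IsScalarTower ℝ A A]
    (halt1 : ∀ x y z : A, (x * y) * z - x * (y * z) = -((y * x) * z - y * (x * z)))
    (halt2 : ∀ x y z : A, (x * y) * z - x * (y * z) = -((x * z) * y - x * (z * y)))
    (x y z : A) :
    ((x * (y * z) - y * (x * z)) + (x * (z * y) - (x * z) * y))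
        + ((z * y) * x - (z * x) * y)
      = ((x * y - y * x) * z - z * (x * y - y * x))
          - (3 : ℝ) • ((x * y) * z - x * (y * z)) := by
  have h3 : (3 : ℝ) • ((x * y) * z - x * (y * z))
      = ((x * y) * z - x * (y * z)) + ((x * y) * z - x * (y * z))
        + ((x * y) * z - x * (y * z)) := by module
  rw [h3]
  have e1 := halt1 x y z           -- a(x,y,z) = -a(y,x,z)
  have e3 := halt1 x z y           -- a(x,z,y) = -a(z,x,y)
  have e4 := halt2 y x z           -- a(y,x,z) = -a(y,z,x)
  have e5 := halt1 y z x           -- a(y,z,x) = -a(z,y,x)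
  linear_combination (norm := noncomm_ring) e1 + e1 - e3 - e4 + e5
end

section
/- Let A be a (not necessarily associative) ℝ-algebra whose associator is an alternating function of its three arguments, and set D_{x,y} := [L_x,L_y] + [L_x,R_y] + [R_x,R_y]. Then for all x,y ∈ A the following operator identities hold: [L_x,L_y] = (2/3)·D_{x,y} + (1/3)·L_{[x,y]} + (2/3)·R_{[x,y]}; [L_x,R_y] = −(1/3)·D_{x,y} + (1/3)·L_{[x,y]} − (1/3)·R_{[x,y]}; and [R_x,R_y] = (2/3)·D_{x,y} − (2/3)·L_{[x,y]} − (1/3)·R_{[x,y]}. -/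
/-- `D_{x,y} z` for `D_{x,y} = [L_x,L_y] + [L_x,R_y] + [R_x,R_y]`. -/
def Dop {A : Type*} [NonAssocRing A] (x y z : A) : A :=
  ((x * (y * z) - y * (x * z)) + (x * (z * y) - (x * z) * y))
    + ((z * y) * x - (z * x) * y)

/-- In a (not necessarily associative) real algebra with alternating associator, the
operator identities expressing `[L_x,L_y]`, `[L_x,R_y]` and `[R_x,R_y]` in terms of
`D_{x,y}`, `L_{[x,y]}` and `R_{[x,y]}` hold. -/
theorem statement7 (A : Type*) [NonAssocRing A] [Module ℝ A]
    [SMulCommClass ℝ A A] [IsScalarTower ℝ A A]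
    (halt1 : ∀ x y z : A, (x * y) * z - x * (y * z) = -((y * x) * z - y * (x * z)))
    (halt2 : ∀ x y z : A, (x * y) * z - x * (y * z) = -((x * z) * y - x * (z * y)))
    (x y : A) :
    (∀ z : A, x * (y * z) - y * (x * z)
        = (2 / 3 : ℝ) • Dop x y z + (1 / 3 : ℝ) • ((x * y - y * x) * z)
            + (2 / 3 : ℝ) • (z * (x * y - y * x)))
    ∧ (∀ z : A, x * (z * y) - (x * z) * y
        = -((1 / 3 : ℝ) • Dop x y z) + (1 / 3 : ℝ) • ((x * y - y * x) * z)
            - (1 / 3 : ℝ) • (z * (x * y - y * x)))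
    ∧ (∀ z : A, (z * y) * x - (z * x) * y
        = (2 / 3 : ℝ) • Dop x y z - (2 / 3 : ℝ) • ((x * y - y * x) * z)
            - (1 / 3 : ℝ) • (z * (x * y - y * x))) := by
  have key : ∀ z : A,
      y * (x * z) = (y * x) * z + ((x * y) * z - x * (y * z)) ∧
      x * (z * y) = (x * z) * y + ((x * y) * z - x * (y * z)) ∧
      (z * y) * x = z * (y * x) - ((x * y) * z - x * (y * z)) ∧
      (z * x) * y = z * (x * y) + ((x * y) * z - x * (y * z)) := by
    intro z
    have e1 : y * (x * z) = (y * x) * z + ((x * y) * z - x * (y * z)) := by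
      rw [halt1 x y z]; abel
    have e2 : x * (z * y) = (x * z) * y + ((x * y) * z - x * (y * z)) := by
      rw [halt2 x y z]; abel
    have e3 : (z * y) * x = z * (y * x) - ((x * y) * z - x * (y * z)) := by
      rw [halt1 x y z, halt2 y x z, halt1 y z x]; abel
    have e4 : (z * x) * y = z * (x * y) + ((x * y) * z - x * (y * z)) := by
      rw [eq_add_of_sub_eq (halt2 z x y), e3]; abel
    exact ⟨e1, e2, e3, e4⟩
  refine ⟨fun z => ?_, fun z => ?_, fun z => ?_⟩ <;>
    obtain ⟨e1, e2, e3, e4⟩ := key z <;>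
    simp only [Dop, sub_mul, mul_sub, e1, e2, e3, e4] <;>
    module
end

section
/- Let A be a (not necessarily associative) ℝ-algebra with an ℝ-linear involution x ↦ x̄ satisfying conj(x*y) = ȳ*x̄, such that the associator of A is an alternating function of its three arguments and, for every x, the element x + x̄ lies in the centre and in the nucleus of A. Let X be a 3×3 matrix over A that is antihermitian (Xᴴ = −X) and traceless (its diagonal entries sum to 0), and let H, K be hermitian 3×3 matrices over A (Hᴴ = H, Kᴴ = K). Then [X, {H,K}] = {[X,H], K} + {H, [X,K]}, where [P,Q] = P*Q − Q*P and {P,Q} = P*Q + Q*P with matrix multiplication over A. -/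
def asc3 {A : Type*} [NonAssocRing A] (a b c : A) : A := a * b * c - a * (b * c)

theorem fin3_mk0 (h : 0 < 3) : (⟨0, h⟩ : Fin 3) = 0 := rfl
theorem fin3_mk1 (h : 1 < 3) : (⟨1, h⟩ : Fin 3) = 1 := rfl
theorem fin3_mk2 (h : 2 < 3) : (⟨2, h⟩ : Fin 3) = 2 := rfl

set_option maxHeartbeats 2000000 in
/-- Lemma on 3×3 matrices over an alternative algebra with involution:
`[X,{H,K}] = {[X,H],K} + {H,[X,K]}` for `X` traceless antihermitian and `H`, `K` hermitian. -/
theorem statement10 (A : Type*) [NonAssocRing A] [Module ℝ A]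
    [SMulCommClass ℝ A A] [IsScalarTower ℝ A A]
    (σ : A →ₗ[ℝ] A)
    (hinv : ∀ x : A, σ (σ x) = x)
    (hmul : ∀ x y : A, σ (x * y) = σ y * σ x)
    (halt1 : ∀ x y z : A, (x * y) * z - x * (y * z) = -((y * x) * z - y * (x * z)))
    (halt2 : ∀ x y z : A, (x * y) * z - x * (y * z) = -((x * z) * y - x * (z * y)))
    (hcentre : ∀ x a : A, (x + σ x) * a = a * (x + σ x))
    (hnuc1 : ∀ x a b : A, ((x + σ x) * a) * b = (x + σ x) * (a * b))
    (hnuc2 : ∀ x a b : A, (a * (x + σ x)) * b = a * ((x + σ x) * b))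
    (hnuc3 : ∀ x a b : A, (a * b) * (x + σ x) = a * (b * (x + σ x)))
    (X H K : Matrix (Fin 3) (Fin 3) A)
    (hX : (Matrix.of fun i j => σ (X j i)) = -X)
    (hXtr : X 0 0 + X 1 1 + X 2 2 = 0)
    (hH : (Matrix.of fun i j => σ (H j i)) = H)
    (hK : (Matrix.of fun i j => σ (K j i)) = K) :
    X * (H * K + K * H) - (H * K + K * H) * X
      = ((X * H - H * X) * K + K * (X * H - H * X))
          + (H * (X * K - K * X) + (X * K - K * X) * H) := by
  -- basic associator lemmas
  have ha1 : ∀ a b c : A, asc3 a b c = -asc3 b a c := fun a b c => halt1 a b c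
  have ha2 : ∀ a b c : A, asc3 a b c = -asc3 a c b := fun a b c => halt2 a b c
  have add1 : ∀ x y b c : A, asc3 (x + y) b c = asc3 x b c + asc3 y b c := by
    intro x y b c; simp only [asc3, add_mul]; abel
  have add2 : ∀ a x y c : A, asc3 a (x + y) c = asc3 a x c + asc3 a y c := by
    intro a x y c; simp only [asc3, add_mul, mul_add]; abel
  have add3 : ∀ a b x y : A, asc3 a b (x + y) = asc3 a b x + asc3 a b y := by
    intro a b x y; simp only [asc3, mul_add]; abel
  have neg1 : ∀ x b c : A, asc3 (-x) b c = -asc3 x b c := by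
    intro x b c; simp only [asc3, neg_mul, mul_neg]; abel
  have n1 : ∀ x b c : A, asc3 (x + σ x) b c = 0 := by
    intro x b c; simp only [asc3]; rw [hnuc1]; exact sub_self _
  have n2 : ∀ x a c : A, asc3 a (x + σ x) c = 0 := by
    intro x a c; simp only [asc3]; rw [hnuc2]; exact sub_self _
  have n3 : ∀ x a b : A, asc3 a b (x + σ x) = 0 := by
    intro x a b; simp only [asc3]; rw [hnuc3]; exact sub_self _
  have f1 : ∀ x b c : A, asc3 (σ x) b c = -asc3 x b c := by
    intro x b c
    have h := n1 x b c; rw [add1] at h; exact eq_neg_of_add_eq_zero_right h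
  have f2 : ∀ x a c : A, asc3 a (σ x) c = -asc3 a x c := by
    intro x a c
    have h := n2 x a c; rw [add2] at h; exact eq_neg_of_add_eq_zero_right h
  have f3 : ∀ x a b : A, asc3 a b (σ x) = -asc3 a b x := by
    intro x a b
    have h := n3 x a b; rw [add3] at h; exact eq_neg_of_add_eq_zero_right h
  -- entries
  have hXe : ∀ i j, σ (X j i) = -(X i j) := by
    intro i j
    have h := congrFun (congrFun hX i) j
    simpa using h
  have hHe : ∀ i j, σ (H j i) = H i j := by
    intro i j
    have h := congrFun (congrFun hH i) j
    simpa using h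
  have hKe : ∀ i j, σ (K j i) = K i j := by
    intro i j
    have h := congrFun (congrFun hK i) j
    simpa using h
  have xs : ∀ i j, ∀ b c : A, asc3 (X i j) b c = asc3 (X j i) b c := by
    intro i j b c
    have e : X i j = -σ (X j i) := by rw [hXe, neg_neg]
    rw [e, neg1, f1, neg_neg]
  have hs : ∀ i j, ∀ a c : A, asc3 a (H i j) c = -asc3 a (H j i) c := by
    intro i j a c
    have e : H i j = σ (H j i) := (hHe i j).symm
    rw [e, f2]
  have ks : ∀ i j, ∀ a b : A, asc3 a b (K i j) = -asc3 a b (K j i) := by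
    intro i j a b
    have e : K i j = σ (K j i) := (hKe i j).symm
    rw [e, f3]
  have halfzero : ∀ t : A, t = -t → t = 0 := by
    intro t ht
    have h2 : (2:ℝ) • t = 0 := by
      rw [two_smul]
      nth_rewrite 2 [ht]
      exact add_neg_cancel t
    calc t = (2:ℝ)⁻¹ • ((2:ℝ) • t) := (inv_smul_smul₀ two_ne_zero t).symm
    _ = 0 := by rw [h2, smul_zero]
  -- directed simp lemmas
  have x10 : ∀ b c : A, asc3 (X 1 0) b c = asc3 (X 0 1) b c := xs 1 0
  have x20 : ∀ b c : A, asc3 (X 2 0) b c = asc3 (X 0 2) b c := xs 2 0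
  have x21 : ∀ b c : A, asc3 (X 2 1) b c = asc3 (X 1 2) b c := xs 2 1
  have x22 : ∀ b c : A, asc3 (X 2 2) b c = -(asc3 (X 0 0) b c + asc3 (X 1 1) b c) := by
    intro b c
    have e : X 2 2 = -(X 0 0 + X 1 1) := eq_neg_of_add_eq_zero_right hXtr
    rw [e, neg1, add1]
  have h10 : ∀ a c : A, asc3 a (H 1 0) c = -asc3 a (H 0 1) c := fun a c => hs 1 0 a c
  have h20 : ∀ a c : A, asc3 a (H 2 0) c = -asc3 a (H 0 2) c := fun a c => hs 2 0 a c
  have h21 : ∀ a c : A, asc3 a (H 2 1) c = -asc3 a (H 1 2) c := fun a c => hs 2 1 a c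
  have hd0 : ∀ a c : A, asc3 a (H 0 0) c = 0 := fun a c => halfzero _ (hs 0 0 a c)
  have hd1 : ∀ a c : A, asc3 a (H 1 1) c = 0 := fun a c => halfzero _ (hs 1 1 a c)
  have hd2 : ∀ a c : A, asc3 a (H 2 2) c = 0 := fun a c => halfzero _ (hs 2 2 a c)
  have k10 : ∀ a b : A, asc3 a b (K 1 0) = -asc3 a b (K 0 1) := fun a b => ks 1 0 a b
  have k20 : ∀ a b : A, asc3 a b (K 2 0) = -asc3 a b (K 0 2) := fun a b => ks 2 0 a b
  have k21 : ∀ a b : A, asc3 a b (K 2 1) = -asc3 a b (K 1 2) := fun a b => ks 2 1 a b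
  have kd0 : ∀ a b : A, asc3 a b (K 0 0) = 0 := fun a b => halfzero _ (ks 0 0 a b)
  have kd1 : ∀ a b : A, asc3 a b (K 1 1) = 0 := fun a b => halfzero _ (ks 1 1 a b)
  have kd2 : ∀ a b : A, asc3 a b (K 2 2) = 0 := fun a b => halfzero _ (ks 2 2 a b)
  have s1 : ∀ (a b c d : Fin 3) (e : A), asc3 (H a b) (X c d) e = -asc3 (X c d) (H a b) e :=
    fun a b c d e => ha1 _ _ _
  have s2 : ∀ (a b c d : Fin 3) (e : A), asc3 (K a b) (X c d) e = -asc3 (X c d) (K a b) e :=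
    fun a b c d e => ha1 _ _ _
  have s3 : ∀ (a b c d : Fin 3) (e : A), asc3 e (K a b) (H c d) = -asc3 e (H c d) (K a b) :=
    fun a b c d e => ha2 _ _ _
  have s5 : ∀ (a b c d : Fin 3) (e : A), asc3 (H a b) e (X c d) = asc3 (X c d) (H a b) e := by
    intro a b c d e
    rw [ha2, ha1, neg_neg]
  have s6 : ∀ (a b c d : Fin 3) (e : A), asc3 (K a b) e (X c d) = asc3 (X c d) (K a b) e := by
    intro a b c d e
    rw [ha2, ha1, neg_neg]
  have mlem : ∀ P Q R : Matrix (Fin 3) (Fin 3) A,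
      P * (Q * R) - (P * Q) * R
        = Matrix.of (fun i j => ∑ k, ∑ l, -asc3 (P i k) (Q k l) (R l j)) := by
    intro P Q R
    ext i j
    simp only [Matrix.sub_apply, Matrix.mul_apply, Matrix.of_apply, Finset.mul_sum,
      Finset.sum_mul, asc3, neg_sub, Finset.sum_sub_distrib]
    congr 1
    exact Finset.sum_comm
  have split : X * (H * K + K * H) - (H * K + K * H) * X
      - ((((X * H - H * X) * K + K * (X * H - H * X))
          + (H * (X * K - K * X) + (X * K - K * X) * H)))
      = (X * (H * K) - (X * H) * K) + (X * (K * H) - (X * K) * H)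
        + (H * (K * X) - (H * K) * X) + (K * (H * X) - (K * H) * X)
        - (H * (X * K) - (H * X) * K) - (K * (X * H) - (K * X) * H) := by
    simp only [mul_add, add_mul, mul_sub, sub_mul]
    abel
  rw [← sub_eq_zero, split, mlem X H K, mlem X K H, mlem H K X, mlem K H X,
    mlem H X K, mlem K X H]
  ext i j
  fin_cases i <;> fin_cases j <;>
    simp only [Matrix.add_apply, Matrix.sub_apply, Matrix.of_apply, Matrix.zero_apply,
      Fin.sum_univ_three, fin3_mk0, fin3_mk1, fin3_mk2] <;>
  · simp only [s1, s2, s3, s5, s6, x10, x20, x21, x22, h10, h20, h21, hd0, hd1, hd2,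
      k10, k20, k21, kd0, kd1, kd2, neg_neg, neg_zero, neg_add_rev]
    abel
end

section
/- Let A be a (not necessarily associative) ℝ-algebra with an ℝ-linear involution x ↦ x̄ satisfying conj(x*y) = ȳ*x̄, such that the associator of A is an alternating function of its three arguments and, for every x, the element x + x̄ lies in the centre and in the nucleus of A. Let X and Y be traceless antihermitian 3×3 matrices over A and let H be a hermitian 3×3 matrix over A. Then [X,[Y,H]] − [Y,[X,H]] = [[X,Y],H] − E(X,Y)H, where E(X,Y)H is the matrix obtained by applying entrywise to H the map z ↦ Σ_{i,j} [X_{ij}, Y_{ji}, z] (sum of associators over all index pairs), and [P,Q] = P*Q − Q*P. -/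
def asc {A : Type*} [NonAssocRing A] (x y z : A) : A := x * y * z - x * (y * z)

theorem asc_add₁ {A : Type*} [NonAssocRing A] (x x' y z : A) :
    asc (x + x') y z = asc x y z + asc x' y z := by simp [asc, add_mul]; abel

theorem asc_neg₁ {A : Type*} [NonAssocRing A] (x y z : A) :
    asc (-x) y z = -asc x y z := by simp [asc, neg_mul]; abel

theorem asc_add₂ {A : Type*} [NonAssocRing A] (x y y' z : A) :
    asc x (y + y') z = asc x y z + asc x y' z := by simp [asc, add_mul, mul_add]; abel

theorem asc_neg₂ {A : Type*} [NonAssocRing A] (x y z : A) :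
    asc x (-y) z = -asc x y z := by simp [asc, neg_mul, mul_neg]; abel

theorem asc_add₃ {A : Type*} [NonAssocRing A] (x y z z' : A) :
    asc x y (z + z') = asc x y z + asc x y z' := by simp [asc, mul_add]; abel

set_option maxHeartbeats 2000000 in
/-- Lemma on 3×3 matrices over an alternative algebra with involution:
`[X,[Y,H]] - [Y,[X,H]] = [[X,Y],H] - E(X,Y)H` for `X`, `Y` traceless antihermitian and
`H` hermitian, where `E(X,Y)` acts entrywise by `z ↦ Σᵢⱼ [Xᵢⱼ, Yⱼᵢ, z]`. -/
theorem statement11 (A : Type*) [NonAssocRing A] [Module ℝ A]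
    [SMulCommClass ℝ A A] [IsScalarTower ℝ A A]
    (σ : A →ₗ[ℝ] A)
    (hinv : ∀ x : A, σ (σ x) = x)
    (hmul : ∀ x y : A, σ (x * y) = σ y * σ x)
    (halt1 : ∀ x y z : A, (x * y) * z - x * (y * z) = -((y * x) * z - y * (x * z)))
    (halt2 : ∀ x y z : A, (x * y) * z - x * (y * z) = -((x * z) * y - x * (z * y)))
    (hcentre : ∀ x a : A, (x + σ x) * a = a * (x + σ x))
    (hnuc1 : ∀ x a b : A, ((x + σ x) * a) * b = (x + σ x) * (a * b))
    (hnuc2 : ∀ x a b : A, (a * (x + σ x)) * b = a * ((x + σ x) * b))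
    (hnuc3 : ∀ x a b : A, (a * b) * (x + σ x) = a * (b * (x + σ x)))
    (X Y H : Matrix (Fin 3) (Fin 3) A)
    (hX : (Matrix.of fun i j => σ (X j i)) = -X)
    (hXtr : X 0 0 + X 1 1 + X 2 2 = 0)
    (hY : (Matrix.of fun i j => σ (Y j i)) = -Y)
    (hYtr : Y 0 0 + Y 1 1 + Y 2 2 = 0)
    (hH : (Matrix.of fun i j => σ (H j i)) = H) :
    (X * (Y * H - H * Y) - (Y * H - H * Y) * X)
        - (Y * (X * H - H * X) - (X * H - H * X) * Y)
      = ((X * Y - Y * X) * H - H * (X * Y - Y * X))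
          - Matrix.of (fun a b =>
              ∑ i : Fin 3, ∑ j : Fin 3,
                ((X i j * Y j i) * H a b - X i j * (Y j i * H a b))) := by
  -- entrywise involution facts
  have hXe : ∀ i j, σ (X i j) = -(X j i) := by
    intro i j; have := congrFun (congrFun hX j) i; simpa using this
  have hYe : ∀ i j, σ (Y i j) = -(Y j i) := by
    intro i j; have := congrFun (congrFun hY j) i; simpa using this
  have hHe : ∀ i j, σ (H i j) = H j i := by
    intro i j; have := congrFun (congrFun hH j) i; simpa using this
  -- nucleus facts
  have n1 : ∀ x a b : A, asc (x + σ x) a b = 0 := by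
    intro x a b; exact sub_eq_zero_of_eq (hnuc1 x a b)
  have n2 : ∀ x a b : A, asc a (x + σ x) b = 0 := by
    intro x a b; exact sub_eq_zero_of_eq (hnuc2 x a b)
  have n3 : ∀ x a b : A, asc a b (x + σ x) = 0 := by
    intro x a b; exact sub_eq_zero_of_eq (hnuc3 x a b)
  -- symmetry of X entries in first slot
  have fX1 : ∀ i j (y z : A), asc (X i j) y z = asc (X j i) y z := by
    intro i j y z
    have h := n1 (X i j) y z
    rw [hXe i j, asc_add₁, asc_neg₁, ← sub_eq_add_neg] at h
    exact sub_eq_zero.mp h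
  have fY2 : ∀ i j (x z : A), asc x (Y i j) z = asc x (Y j i) z := by
    intro i j x z
    have h := n2 (Y i j) x z
    rw [hYe i j, asc_add₂, asc_neg₂, ← sub_eq_add_neg] at h
    exact sub_eq_zero.mp h
  have fH3 : ∀ i j (x y : A), asc x y (H i j) = -asc x y (H j i) := by
    intro i j x y
    have h := n3 (H i j) x y
    rw [hHe i j, asc_add₃] at h
    exact eq_neg_of_add_eq_zero_left h
  have fH3d : ∀ i (x y : A), asc x y (H i i) = 0 := by
    intro i x y
    have h : asc x y (H i i) + asc x y (H i i) = 0 :=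
      add_eq_zero_iff_eq_neg.mpr (fH3 i i x y)
    have h3 : asc x y (H i i) = (2⁻¹ : ℝ) • (asc x y (H i i) + asc x y (H i i)) := by
      rw [smul_add, ← add_smul]; norm_num
    rw [h3, h, smul_zero]
  -- full antisymmetry
  have s12 : ∀ x y z : A, asc x y z = -asc y x z := fun x y z => halt1 x y z
  have s23 : ∀ x y z : A, asc x y z = -asc x z y := fun x y z => halt2 x y z
  have cyc : ∀ x y z : A, asc z x y = asc x y z := by
    intro x y z; rw [s12 z x y, s23 x z y, neg_neg]
  -- ordering simp lemmas
  have r1 : ∀ i j k l (z : A), asc (Y i j) (X k l) z = -asc (X k l) (Y i j) z :=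
    fun i j k l z => s12 _ _ _
  have r2 : ∀ (x : A) i j k l, asc x (H i j) (Y k l) = -asc x (Y k l) (H i j) :=
    fun x i j k l => s23 _ _ _
  have r3 : ∀ i j k l m n, asc (H i j) (X k l) (Y m n) = asc (X k l) (Y m n) (H i j) :=
    fun i j k l m n => cyc _ _ _
  have r4 : ∀ i j k l m n, asc (Y i j) (H k l) (X m n) = asc (X m n) (Y i j) (H k l) :=
    fun i j k l m n => (cyc _ _ _).trans (r3 _ _ _ _ _ _)
  have r5 : ∀ i j k l m n, asc (H i j) (Y k l) (X m n) = -asc (X m n) (Y k l) (H i j) :=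
    fun i j k l m n => (s12 _ _ _).trans (congrArg Neg.neg (r4 _ _ _ _ _ _))
  -- index canonicalization
  have x10 : ∀ (y z : A), asc (X 1 0) y z = asc (X 0 1) y z := fun y z => fX1 1 0 y z
  have x20 : ∀ (y z : A), asc (X 2 0) y z = asc (X 0 2) y z := fun y z => fX1 2 0 y z
  have x21 : ∀ (y z : A), asc (X 2 1) y z = asc (X 1 2) y z := fun y z => fX1 2 1 y z
  have hx22 : X 2 2 = -(X 0 0 + X 1 1) := by
    rw [eq_neg_iff_add_eq_zero, add_comm]; exact hXtr
  have x22 : ∀ (y z : A), asc (X 2 2) y z = -asc (X 0 0) y z - asc (X 1 1) y z := by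
    intro y z
    rw [hx22, asc_neg₁, asc_add₁]; abel
  have y10 : ∀ (x z : A), asc x (Y 1 0) z = asc x (Y 0 1) z := fun x z => fY2 1 0 x z
  have y20 : ∀ (x z : A), asc x (Y 2 0) z = asc x (Y 0 2) z := fun x z => fY2 2 0 x z
  have y21 : ∀ (x z : A), asc x (Y 2 1) z = asc x (Y 1 2) z := fun x z => fY2 2 1 x z
  have hy22 : Y 2 2 = -(Y 0 0 + Y 1 1) := by
    rw [eq_neg_iff_add_eq_zero, add_comm]; exact hYtr
  have y22 : ∀ (x z : A), asc x (Y 2 2) z = -asc x (Y 0 0) z - asc x (Y 1 1) z := by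
    intro x z
    rw [hy22, asc_neg₂, asc_add₂]; abel
  have h10 : ∀ (x y : A), asc x y (H 1 0) = -asc x y (H 0 1) := fun x y => fH3 1 0 x y
  have h20 : ∀ (x y : A), asc x y (H 2 0) = -asc x y (H 0 2) := fun x y => fH3 2 0 x y
  have h21 : ∀ (x y : A), asc x y (H 2 1) = -asc x y (H 1 2) := fun x y => fH3 2 1 x y
  -- the core combinatorial identity
  have core : ∀ a b : Fin 3,
      (∑ k : Fin 3, ∑ l : Fin 3,
        (-(asc (X a k) (Y k l) (H l b)) + asc (Y a k) (X k l) (H l b)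
          + asc (X a k) (H k l) (Y l b) - asc (H a k) (X k l) (Y l b)
          - asc (Y a k) (H k l) (X l b) + asc (H a k) (Y k l) (X l b)))
        + ∑ i : Fin 3, ∑ j : Fin 3, asc (X i j) (Y j i) (H a b) = 0 := by
    intro a b
    fin_cases a <;> fin_cases b <;>
      simp only [Fin.zero_eta, Fin.mk_one, Fin.reduceFinMk, Fin.isValue, Fin.sum_univ_three, r1, r2, r3, r4, r5,
        x10, x20, x21, x22, y10, y20, y21, y22, h10, h20, h21, fH3d] <;>
      abel
  ext a b
  have hc := core a b
  simp only [asc, Fin.sum_univ_three] at hc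
  simp only [Matrix.sub_apply, Matrix.mul_apply, Matrix.of_apply, Fin.sum_univ_three,
    mul_sub, sub_mul, mul_add, add_mul]
  linear_combination (norm := abel) hc
end

section
/- Let A be a (not necessarily associative) ℝ-algebra with an ℝ-linear involution x ↦ x̄ satisfying conj(x*y) = ȳ*x̄, such that the associator of A is an alternating function of its three arguments and, for every x, the element x + x̄ lies in the centre and in the nucleus of A. Let X be any antihermitian 2×2 matrix over A (Xᴴ = −X, no trace condition), and let H, K be hermitian 2×2 matrices over A. Then [X, {H,K}] = {[X,H], K} + {H, [X,K]}, where [P,Q] = P*Q − Q*P and {P,Q} = P*Q + Q*P with matrix multiplication over A. -/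
/-- Lemma on 2×2 matrices over an alternative algebra with involution:
`[X,{H,K}] = {[X,H],K} + {H,[X,K]}` for `X` antihermitian (no trace condition) and
`H`, `K` hermitian. -/
theorem statement12 (A : Type*) [NonAssocRing A] [Module ℝ A]
    [SMulCommClass ℝ A A] [IsScalarTower ℝ A A]
    (σ : A →ₗ[ℝ] A)
    (hinv : ∀ x : A, σ (σ x) = x)
    (hmul : ∀ x y : A, σ (x * y) = σ y * σ x)
    (halt1 : ∀ x y z : A, (x * y) * z - x * (y * z) = -((y * x) * z - y * (x * z)))
    (halt2 : ∀ x y z : A, (x * y) * z - x * (y * z) = -((x * z) * y - x * (z * y)))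
    (hcentre : ∀ x a : A, (x + σ x) * a = a * (x + σ x))
    (hnuc1 : ∀ x a b : A, ((x + σ x) * a) * b = (x + σ x) * (a * b))
    (hnuc2 : ∀ x a b : A, (a * (x + σ x)) * b = a * ((x + σ x) * b))
    (hnuc3 : ∀ x a b : A, (a * b) * (x + σ x) = a * (b * (x + σ x)))
    (X H K : Matrix (Fin 2) (Fin 2) A)
    (hX : (Matrix.of fun i j => σ (X j i)) = -X)
    (hH : (Matrix.of fun i j => σ (H j i)) = H)
    (hK : (Matrix.of fun i j => σ (K j i)) = K) :
    X * (H * K + K * H) - (H * K + K * H) * X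
      = ((X * H - H * X) * K + K * (X * H - H * X))
          + (H * (X * K - K * X) + (X * K - K * X) * H) := by
  have hXe : ∀ i j : Fin 2, σ (X j i) = -(X i j) := by
    intro i j
    have h := congrFun (congrFun hX i) j
    simpa using h
  have hHe : ∀ i j : Fin 2, σ (H j i) = H i j := by
    intro i j
    have h := congrFun (congrFun hH i) j
    simpa using h
  have hKe : ∀ i j : Fin 2, σ (K j i) = K i j := by
    intro i j
    have h := congrFun (congrFun hK i) j
    simpa using h
  have neg1 : ∀ a b c : A, (-a) * b * c - (-a) * (b * c) = -(a * b * c - a * (b * c)) := by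
    intro a b c; simp only [neg_mul, mul_neg]; abel
  have sflip1 : ∀ a b c : A, σ a * b * c - σ a * (b * c) = -(a * b * c - a * (b * c)) := by
    intro a b c
    have h := hnuc1 a b c
    simp only [add_mul, mul_add] at h
    linear_combination (norm := abel) h
  have sflip2 : ∀ a b c : A, a * σ b * c - a * (σ b * c) = -(a * b * c - a * (b * c)) := by
    intro a b c
    have h := hnuc2 b a c
    simp only [add_mul, mul_add] at h
    linear_combination (norm := abel) h
  have sflip3 : ∀ a b c : A, a * b * σ c - a * (b * σ c) = -(a * b * c - a * (b * c)) := by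
    intro a b c
    have h := hnuc3 c a b
    simp only [add_mul, mul_add] at h
    linear_combination (norm := abel) h
  have swap13 : ∀ a b c : A, a * b * c - a * (b * c) = -(c * b * a - c * (b * a)) := by
    intro a b c
    rw [halt1 a b c, halt2 b a c, halt1 b c a]; abel
  have halfzero : ∀ r : A, r = -r → r = 0 := by
    intro r h
    have h1 : r + r = 0 := by nth_rewrite 2 [h]; abel
    have h2 : (2:ℝ) • r = 0 := by rw [two_smul]; exact h1
    calc r = (2⁻¹ : ℝ) • ((2:ℝ) • r) := by rw [smul_smul]; norm_num
      _ = 0 := by rw [h2, smul_zero]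
  have cX : ∀ b c : A, X 1 0 * b * c - X 1 0 * (b * c)
      = X 0 1 * b * c - X 0 1 * (b * c) := by
    intro b c
    have hx : X 1 0 = -σ (X 0 1) := by rw [hXe 1 0, neg_neg]
    rw [hx, neg1, sflip1, neg_neg]
  have cH : ∀ a c : A, a * H 1 0 * c - a * (H 1 0 * c)
      = -(a * H 0 1 * c - a * (H 0 1 * c)) := by
    intro a c
    have hh : H 1 0 = σ (H 0 1) := (hHe 1 0).symm
    rw [hh, sflip2]
  have cK : ∀ a b : A, a * b * K 1 0 - a * (b * K 1 0)
      = -(a * b * K 0 1 - a * (b * K 0 1)) := by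
    intro a b
    have hk : K 1 0 = σ (K 0 1) := (hKe 1 0).symm
    rw [hk, sflip3]
  have cH0 : ∀ a c : A, a * H 0 0 * c - a * (H 0 0 * c) = 0 := by
    intro a c
    have h := sflip2 a (H 0 0) c
    rw [hHe 0 0] at h
    exact halfzero _ h
  have cH3 : ∀ a c : A, a * H 1 1 * c - a * (H 1 1 * c) = 0 := by
    intro a c
    have h := sflip2 a (H 1 1) c
    rw [hHe 1 1] at h
    exact halfzero _ h
  have cK0 : ∀ a b : A, a * b * K 0 0 - a * (b * K 0 0) = 0 := by
    intro a b
    have h := sflip3 a b (K 0 0)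
    rw [hKe 0 0] at h
    exact halfzero _ h
  have cK3 : ∀ a b : A, a * b * K 1 1 - a * (b * K 1 1) = 0 := by
    intro a b
    have h := sflip3 a b (K 1 1)
    rw [hKe 1 1] at h
    exact halfzero _ h
  ext i j
  fin_cases i <;> fin_cases j <;>
    simp only [Matrix.mul_apply, Matrix.add_apply, Matrix.sub_apply, Fin.sum_univ_two,
      Fin.mk_zero, Fin.mk_one, mul_add, add_mul, mul_sub, sub_mul]
  · -- entry (0,0)
    have e0 : X 0 0 * H 0 0 * K 0 0 - X 0 0 * (H 0 0 * K 0 0) = (0 : A) := by rw [cH0 (X 0 0) (K 0 0)]; try abel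
    have e1 : X 0 0 * K 0 0 * H 0 0 - X 0 0 * (K 0 0 * H 0 0) = (0 : A) := by rw [halt2 (X 0 0) (K 0 0) (H 0 0), cH0 (X 0 0) (K 0 0)]; try abel
    have e2 : H 0 0 * K 0 0 * X 0 0 - H 0 0 * (K 0 0 * X 0 0) = (0 : A) := by rw [swap13 (H 0 0) (K 0 0) (X 0 0), halt2 (X 0 0) (K 0 0) (H 0 0), cH0 (X 0 0) (K 0 0)]; try abel
    have e3 : K 0 0 * H 0 0 * X 0 0 - K 0 0 * (H 0 0 * X 0 0) = (0 : A) := by rw [swap13 (K 0 0) (H 0 0) (X 0 0), cH0 (X 0 0) (K 0 0)]; try abel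
    have e4 : H 0 0 * X 0 0 * K 0 0 - H 0 0 * (X 0 0 * K 0 0) = (0 : A) := by rw [halt1 (H 0 0) (X 0 0) (K 0 0), cH0 (X 0 0) (K 0 0)]; try abel
    have e5 : K 0 0 * X 0 0 * H 0 0 - K 0 0 * (X 0 0 * H 0 0) = (0 : A) := by rw [swap13 (K 0 0) (X 0 0) (H 0 0), halt1 (H 0 0) (X 0 0) (K 0 0), cH0 (X 0 0) (K 0 0)]; try abel
    have e6 : X 0 0 * H 0 1 * K 1 0 - X 0 0 * (H 0 1 * K 1 0) = -(X 0 0 * H 0 1 * K 0 1 - X 0 0 * (H 0 1 * K 0 1)) := by rw [cK (X 0 0) (H 0 1)]; try abel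
    have e7 : X 0 0 * K 0 1 * H 1 0 - X 0 0 * (K 0 1 * H 1 0) = (X 0 0 * H 0 1 * K 0 1 - X 0 0 * (H 0 1 * K 0 1)) := by rw [halt2 (X 0 0) (K 0 1) (H 1 0), cH (X 0 0) (K 0 1)]; try abel
    have e8 : H 0 0 * K 0 1 * X 1 0 - H 0 0 * (K 0 1 * X 1 0) = (0 : A) := by rw [swap13 (H 0 0) (K 0 1) (X 1 0), halt2 (X 1 0) (K 0 1) (H 0 0), cX (H 0 0) (K 0 1), cH0 (X 0 1) (K 0 1)]; try abel
    have e9 : K 0 0 * H 0 1 * X 1 0 - K 0 0 * (H 0 1 * X 1 0) = (0 : A) := by rw [swap13 (K 0 0) (H 0 1) (X 1 0), cX (H 0 1) (K 0 0), cK0 (X 0 1) (H 0 1)]; try abel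
    have e10 : H 0 0 * X 0 1 * K 1 0 - H 0 0 * (X 0 1 * K 1 0) = (0 : A) := by rw [halt1 (H 0 0) (X 0 1) (K 1 0), cH0 (X 0 1) (K 1 0)]; try abel
    have e11 : K 0 0 * X 0 1 * H 1 0 - K 0 0 * (X 0 1 * H 1 0) = (0 : A) := by rw [swap13 (K 0 0) (X 0 1) (H 1 0), halt1 (H 1 0) (X 0 1) (K 0 0), cH (X 0 1) (K 0 0), cK0 (X 0 1) (H 0 1)]; try abel
    have e12 : X 0 1 * H 1 0 * K 0 0 - X 0 1 * (H 1 0 * K 0 0) = (0 : A) := by rw [cH (X 0 1) (K 0 0), cK0 (X 0 1) (H 0 1)]; try abel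
    have e13 : X 0 1 * K 1 0 * H 0 0 - X 0 1 * (K 1 0 * H 0 0) = (0 : A) := by rw [halt2 (X 0 1) (K 1 0) (H 0 0), cH0 (X 0 1) (K 1 0)]; try abel
    have e14 : H 0 1 * K 1 0 * X 0 0 - H 0 1 * (K 1 0 * X 0 0) = -(X 0 0 * H 0 1 * K 0 1 - X 0 0 * (H 0 1 * K 0 1)) := by rw [swap13 (H 0 1) (K 1 0) (X 0 0), halt2 (X 0 0) (K 1 0) (H 0 1), cK (X 0 0) (H 0 1)]; try abel
    have e15 : K 0 1 * H 1 0 * X 0 0 - K 0 1 * (H 1 0 * X 0 0) = (X 0 0 * H 0 1 * K 0 1 - X 0 0 * (H 0 1 * K 0 1)) := by rw [swap13 (K 0 1) (H 1 0) (X 0 0), cH (X 0 0) (K 0 1)]; try abel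
    have e16 : H 0 1 * X 1 0 * K 0 0 - H 0 1 * (X 1 0 * K 0 0) = (0 : A) := by rw [halt1 (H 0 1) (X 1 0) (K 0 0), cX (H 0 1) (K 0 0), cK0 (X 0 1) (H 0 1)]; try abel
    have e17 : K 0 1 * X 1 0 * H 0 0 - K 0 1 * (X 1 0 * H 0 0) = (0 : A) := by rw [swap13 (K 0 1) (X 1 0) (H 0 0), halt1 (H 0 0) (X 1 0) (K 0 1), cX (H 0 0) (K 0 1), cH0 (X 0 1) (K 0 1)]; try abel
    have e18 : X 0 1 * H 1 1 * K 1 0 - X 0 1 * (H 1 1 * K 1 0) = (0 : A) := by rw [cH3 (X 0 1) (K 1 0)]; try abel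
    have e19 : X 0 1 * K 1 1 * H 1 0 - X 0 1 * (K 1 1 * H 1 0) = (0 : A) := by rw [halt2 (X 0 1) (K 1 1) (H 1 0), cH (X 0 1) (K 1 1), cK3 (X 0 1) (H 0 1)]; try abel
    have e20 : H 0 1 * K 1 1 * X 1 0 - H 0 1 * (K 1 1 * X 1 0) = (0 : A) := by rw [swap13 (H 0 1) (K 1 1) (X 1 0), halt2 (X 1 0) (K 1 1) (H 0 1), cX (H 0 1) (K 1 1), cK3 (X 0 1) (H 0 1)]; try abel
    have e21 : K 0 1 * H 1 1 * X 1 0 - K 0 1 * (H 1 1 * X 1 0) = (0 : A) := by rw [swap13 (K 0 1) (H 1 1) (X 1 0), cX (H 1 1) (K 0 1), cH3 (X 0 1) (K 0 1)]; try abel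
    have e22 : H 0 1 * X 1 1 * K 1 0 - H 0 1 * (X 1 1 * K 1 0) = (X 1 1 * H 0 1 * K 0 1 - X 1 1 * (H 0 1 * K 0 1)) := by rw [halt1 (H 0 1) (X 1 1) (K 1 0), cK (X 1 1) (H 0 1)]; try abel
    have e23 : K 0 1 * X 1 1 * H 1 0 - K 0 1 * (X 1 1 * H 1 0) = -(X 1 1 * H 0 1 * K 0 1 - X 1 1 * (H 0 1 * K 0 1)) := by rw [swap13 (K 0 1) (X 1 1) (H 1 0), halt1 (H 1 0) (X 1 1) (K 0 1), cH (X 1 1) (K 0 1)]; try abel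
    linear_combination (norm := abel) -e0 -e1 -e2 -e3 +e4 +e5 -e6 -e7 -e8 -e9 +e10 +e11 -e12 -e13 -e14 -e15 +e16 +e17 -e18 -e19 -e20 -e21 +e22 +e23
  · -- entry (0,1)
    have e24 : X 0 0 * H 0 0 * K 0 1 - X 0 0 * (H 0 0 * K 0 1) = (0 : A) := by rw [cH0 (X 0 0) (K 0 1)]; try abel
    have e25 : X 0 0 * K 0 0 * H 0 1 - X 0 0 * (K 0 0 * H 0 1) = (0 : A) := by rw [halt2 (X 0 0) (K 0 0) (H 0 1), cK0 (X 0 0) (H 0 1)]; try abel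
    have e26 : H 0 0 * K 0 0 * X 0 1 - H 0 0 * (K 0 0 * X 0 1) = (0 : A) := by rw [swap13 (H 0 0) (K 0 0) (X 0 1), halt2 (X 0 1) (K 0 0) (H 0 0), cH0 (X 0 1) (K 0 0)]; try abel
    have e27 : K 0 0 * H 0 0 * X 0 1 - K 0 0 * (H 0 0 * X 0 1) = (0 : A) := by rw [swap13 (K 0 0) (H 0 0) (X 0 1), cH0 (X 0 1) (K 0 0)]; try abel
    have e28 : H 0 0 * X 0 0 * K 0 1 - H 0 0 * (X 0 0 * K 0 1) = (0 : A) := by rw [halt1 (H 0 0) (X 0 0) (K 0 1), cH0 (X 0 0) (K 0 1)]; try abel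
    have e29 : K 0 0 * X 0 0 * H 0 1 - K 0 0 * (X 0 0 * H 0 1) = (0 : A) := by rw [swap13 (K 0 0) (X 0 0) (H 0 1), halt1 (H 0 1) (X 0 0) (K 0 0), cK0 (X 0 0) (H 0 1)]; try abel
    have e30 : X 0 0 * H 0 1 * K 1 1 - X 0 0 * (H 0 1 * K 1 1) = (0 : A) := by rw [cK3 (X 0 0) (H 0 1)]; try abel
    have e31 : X 0 0 * K 0 1 * H 1 1 - X 0 0 * (K 0 1 * H 1 1) = (0 : A) := by rw [halt2 (X 0 0) (K 0 1) (H 1 1), cH3 (X 0 0) (K 0 1)]; try abel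
    have e32 : H 0 0 * K 0 1 * X 1 1 - H 0 0 * (K 0 1 * X 1 1) = (0 : A) := by rw [swap13 (H 0 0) (K 0 1) (X 1 1), halt2 (X 1 1) (K 0 1) (H 0 0), cH0 (X 1 1) (K 0 1)]; try abel
    have e33 : K 0 0 * H 0 1 * X 1 1 - K 0 0 * (H 0 1 * X 1 1) = (0 : A) := by rw [swap13 (K 0 0) (H 0 1) (X 1 1), cK0 (X 1 1) (H 0 1)]; try abel
    have e34 : H 0 0 * X 0 1 * K 1 1 - H 0 0 * (X 0 1 * K 1 1) = (0 : A) := by rw [halt1 (H 0 0) (X 0 1) (K 1 1), cH0 (X 0 1) (K 1 1)]; try abel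
    have e35 : K 0 0 * X 0 1 * H 1 1 - K 0 0 * (X 0 1 * H 1 1) = (0 : A) := by rw [swap13 (K 0 0) (X 0 1) (H 1 1), halt1 (H 1 1) (X 0 1) (K 0 0), cH3 (X 0 1) (K 0 0)]; try abel
    have e36 : X 0 1 * H 1 0 * K 0 1 - X 0 1 * (H 1 0 * K 0 1) = -(X 0 1 * H 0 1 * K 0 1 - X 0 1 * (H 0 1 * K 0 1)) := by rw [cH (X 0 1) (K 0 1)]; try abel
    have e37 : X 0 1 * K 1 0 * H 0 1 - X 0 1 * (K 1 0 * H 0 1) = (X 0 1 * H 0 1 * K 0 1 - X 0 1 * (H 0 1 * K 0 1)) := by rw [halt2 (X 0 1) (K 1 0) (H 0 1), cK (X 0 1) (H 0 1)]; try abel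
    have e38 : H 0 1 * K 1 0 * X 0 1 - H 0 1 * (K 1 0 * X 0 1) = -(X 0 1 * H 0 1 * K 0 1 - X 0 1 * (H 0 1 * K 0 1)) := by rw [swap13 (H 0 1) (K 1 0) (X 0 1), halt2 (X 0 1) (K 1 0) (H 0 1), cK (X 0 1) (H 0 1)]; try abel
    have e39 : K 0 1 * H 1 0 * X 0 1 - K 0 1 * (H 1 0 * X 0 1) = (X 0 1 * H 0 1 * K 0 1 - X 0 1 * (H 0 1 * K 0 1)) := by rw [swap13 (K 0 1) (H 1 0) (X 0 1), cH (X 0 1) (K 0 1)]; try abel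
    have e40 : H 0 1 * X 1 0 * K 0 1 - H 0 1 * (X 1 0 * K 0 1) = -(X 0 1 * H 0 1 * K 0 1 - X 0 1 * (H 0 1 * K 0 1)) := by rw [halt1 (H 0 1) (X 1 0) (K 0 1), cX (H 0 1) (K 0 1)]; try abel
    have e41 : K 0 1 * X 1 0 * H 0 1 - K 0 1 * (X 1 0 * H 0 1) = (X 0 1 * H 0 1 * K 0 1 - X 0 1 * (H 0 1 * K 0 1)) := by rw [swap13 (K 0 1) (X 1 0) (H 0 1), halt1 (H 0 1) (X 1 0) (K 0 1), cX (H 0 1) (K 0 1)]; try abel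
    have e42 : X 0 1 * H 1 1 * K 1 1 - X 0 1 * (H 1 1 * K 1 1) = (0 : A) := by rw [cH3 (X 0 1) (K 1 1)]; try abel
    have e43 : X 0 1 * K 1 1 * H 1 1 - X 0 1 * (K 1 1 * H 1 1) = (0 : A) := by rw [halt2 (X 0 1) (K 1 1) (H 1 1), cH3 (X 0 1) (K 1 1)]; try abel
    have e44 : H 0 1 * K 1 1 * X 1 1 - H 0 1 * (K 1 1 * X 1 1) = (0 : A) := by rw [swap13 (H 0 1) (K 1 1) (X 1 1), halt2 (X 1 1) (K 1 1) (H 0 1), cK3 (X 1 1) (H 0 1)]; try abel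
    have e45 : K 0 1 * H 1 1 * X 1 1 - K 0 1 * (H 1 1 * X 1 1) = (0 : A) := by rw [swap13 (K 0 1) (H 1 1) (X 1 1), cH3 (X 1 1) (K 0 1)]; try abel
    have e46 : H 0 1 * X 1 1 * K 1 1 - H 0 1 * (X 1 1 * K 1 1) = (0 : A) := by rw [halt1 (H 0 1) (X 1 1) (K 1 1), cK3 (X 1 1) (H 0 1)]; try abel
    have e47 : K 0 1 * X 1 1 * H 1 1 - K 0 1 * (X 1 1 * H 1 1) = (0 : A) := by rw [swap13 (K 0 1) (X 1 1) (H 1 1), halt1 (H 1 1) (X 1 1) (K 0 1), cH3 (X 1 1) (K 0 1)]; try abel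
    linear_combination (norm := abel) -e24 -e25 -e26 -e27 +e28 +e29 -e30 -e31 -e32 -e33 +e34 +e35 -e36 -e37 -e38 -e39 +e40 +e41 -e42 -e43 -e44 -e45 +e46 +e47
  · -- entry (1,0)
    have e48 : X 1 0 * H 0 0 * K 0 0 - X 1 0 * (H 0 0 * K 0 0) = (0 : A) := by rw [cX (H 0 0) (K 0 0), cH0 (X 0 1) (K 0 0)]; try abel
    have e49 : X 1 0 * K 0 0 * H 0 0 - X 1 0 * (K 0 0 * H 0 0) = (0 : A) := by rw [halt2 (X 1 0) (K 0 0) (H 0 0), cX (H 0 0) (K 0 0), cH0 (X 0 1) (K 0 0)]; try abel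
    have e50 : H 1 0 * K 0 0 * X 0 0 - H 1 0 * (K 0 0 * X 0 0) = (0 : A) := by rw [swap13 (H 1 0) (K 0 0) (X 0 0), halt2 (X 0 0) (K 0 0) (H 1 0), cH (X 0 0) (K 0 0), cK0 (X 0 0) (H 0 1)]; try abel
    have e51 : K 1 0 * H 0 0 * X 0 0 - K 1 0 * (H 0 0 * X 0 0) = (0 : A) := by rw [swap13 (K 1 0) (H 0 0) (X 0 0), cH0 (X 0 0) (K 1 0)]; try abel
    have e52 : H 1 0 * X 0 0 * K 0 0 - H 1 0 * (X 0 0 * K 0 0) = (0 : A) := by rw [halt1 (H 1 0) (X 0 0) (K 0 0), cH (X 0 0) (K 0 0), cK0 (X 0 0) (H 0 1)]; try abel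
    have e53 : K 1 0 * X 0 0 * H 0 0 - K 1 0 * (X 0 0 * H 0 0) = (0 : A) := by rw [swap13 (K 1 0) (X 0 0) (H 0 0), halt1 (H 0 0) (X 0 0) (K 1 0), cH0 (X 0 0) (K 1 0)]; try abel
    have e54 : X 1 0 * H 0 1 * K 1 0 - X 1 0 * (H 0 1 * K 1 0) = -(X 0 1 * H 0 1 * K 0 1 - X 0 1 * (H 0 1 * K 0 1)) := by rw [cX (H 0 1) (K 1 0), cK (X 0 1) (H 0 1)]; try abel
    have e55 : X 1 0 * K 0 1 * H 1 0 - X 1 0 * (K 0 1 * H 1 0) = (X 0 1 * H 0 1 * K 0 1 - X 0 1 * (H 0 1 * K 0 1)) := by rw [halt2 (X 1 0) (K 0 1) (H 1 0), cX (H 1 0) (K 0 1), cH (X 0 1) (K 0 1)]; try abel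
    have e56 : H 1 0 * K 0 1 * X 1 0 - H 1 0 * (K 0 1 * X 1 0) = -(X 0 1 * H 0 1 * K 0 1 - X 0 1 * (H 0 1 * K 0 1)) := by rw [swap13 (H 1 0) (K 0 1) (X 1 0), halt2 (X 1 0) (K 0 1) (H 1 0), cX (H 1 0) (K 0 1), cH (X 0 1) (K 0 1)]; try abel
    have e57 : K 1 0 * H 0 1 * X 1 0 - K 1 0 * (H 0 1 * X 1 0) = (X 0 1 * H 0 1 * K 0 1 - X 0 1 * (H 0 1 * K 0 1)) := by rw [swap13 (K 1 0) (H 0 1) (X 1 0), cX (H 0 1) (K 1 0), cK (X 0 1) (H 0 1)]; try abel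
    have e58 : H 1 0 * X 0 1 * K 1 0 - H 1 0 * (X 0 1 * K 1 0) = -(X 0 1 * H 0 1 * K 0 1 - X 0 1 * (H 0 1 * K 0 1)) := by rw [halt1 (H 1 0) (X 0 1) (K 1 0), cH (X 0 1) (K 1 0), cK (X 0 1) (H 0 1)]; try abel
    have e59 : K 1 0 * X 0 1 * H 1 0 - K 1 0 * (X 0 1 * H 1 0) = (X 0 1 * H 0 1 * K 0 1 - X 0 1 * (H 0 1 * K 0 1)) := by rw [swap13 (K 1 0) (X 0 1) (H 1 0), halt1 (H 1 0) (X 0 1) (K 1 0), cH (X 0 1) (K 1 0), cK (X 0 1) (H 0 1)]; try abel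
    have e60 : X 1 1 * H 1 0 * K 0 0 - X 1 1 * (H 1 0 * K 0 0) = (0 : A) := by rw [cH (X 1 1) (K 0 0), cK0 (X 1 1) (H 0 1)]; try abel
    have e61 : X 1 1 * K 1 0 * H 0 0 - X 1 1 * (K 1 0 * H 0 0) = (0 : A) := by rw [halt2 (X 1 1) (K 1 0) (H 0 0), cH0 (X 1 1) (K 1 0)]; try abel
    have e62 : H 1 1 * K 1 0 * X 0 0 - H 1 1 * (K 1 0 * X 0 0) = (0 : A) := by rw [swap13 (H 1 1) (K 1 0) (X 0 0), halt2 (X 0 0) (K 1 0) (H 1 1), cH3 (X 0 0) (K 1 0)]; try abel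
    have e63 : K 1 1 * H 1 0 * X 0 0 - K 1 1 * (H 1 0 * X 0 0) = (0 : A) := by rw [swap13 (K 1 1) (H 1 0) (X 0 0), cH (X 0 0) (K 1 1), cK3 (X 0 0) (H 0 1)]; try abel
    have e64 : H 1 1 * X 1 0 * K 0 0 - H 1 1 * (X 1 0 * K 0 0) = (0 : A) := by rw [halt1 (H 1 1) (X 1 0) (K 0 0), cX (H 1 1) (K 0 0), cH3 (X 0 1) (K 0 0)]; try abel
    have e65 : K 1 1 * X 1 0 * H 0 0 - K 1 1 * (X 1 0 * H 0 0) = (0 : A) := by rw [swap13 (K 1 1) (X 1 0) (H 0 0), halt1 (H 0 0) (X 1 0) (K 1 1), cX (H 0 0) (K 1 1), cH0 (X 0 1) (K 1 1)]; try abel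
    have e66 : X 1 1 * H 1 1 * K 1 0 - X 1 1 * (H 1 1 * K 1 0) = (0 : A) := by rw [cH3 (X 1 1) (K 1 0)]; try abel
    have e67 : X 1 1 * K 1 1 * H 1 0 - X 1 1 * (K 1 1 * H 1 0) = (0 : A) := by rw [halt2 (X 1 1) (K 1 1) (H 1 0), cH (X 1 1) (K 1 1), cK3 (X 1 1) (H 0 1)]; try abel
    have e68 : H 1 1 * K 1 1 * X 1 0 - H 1 1 * (K 1 1 * X 1 0) = (0 : A) := by rw [swap13 (H 1 1) (K 1 1) (X 1 0), halt2 (X 1 0) (K 1 1) (H 1 1), cX (H 1 1) (K 1 1), cH3 (X 0 1) (K 1 1)]; try abel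
    have e69 : K 1 1 * H 1 1 * X 1 0 - K 1 1 * (H 1 1 * X 1 0) = (0 : A) := by rw [swap13 (K 1 1) (H 1 1) (X 1 0), cX (H 1 1) (K 1 1), cH3 (X 0 1) (K 1 1)]; try abel
    have e70 : H 1 1 * X 1 1 * K 1 0 - H 1 1 * (X 1 1 * K 1 0) = (0 : A) := by rw [halt1 (H 1 1) (X 1 1) (K 1 0), cH3 (X 1 1) (K 1 0)]; try abel
    have e71 : K 1 1 * X 1 1 * H 1 0 - K 1 1 * (X 1 1 * H 1 0) = (0 : A) := by rw [swap13 (K 1 1) (X 1 1) (H 1 0), halt1 (H 1 0) (X 1 1) (K 1 1), cH (X 1 1) (K 1 1), cK3 (X 1 1) (H 0 1)]; try abel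
    linear_combination (norm := abel) -e48 -e49 -e50 -e51 +e52 +e53 -e54 -e55 -e56 -e57 +e58 +e59 -e60 -e61 -e62 -e63 +e64 +e65 -e66 -e67 -e68 -e69 +e70 +e71
  · -- entry (1,1)
    have e72 : X 1 0 * H 0 0 * K 0 1 - X 1 0 * (H 0 0 * K 0 1) = (0 : A) := by rw [cX (H 0 0) (K 0 1), cH0 (X 0 1) (K 0 1)]; try abel
    have e73 : X 1 0 * K 0 0 * H 0 1 - X 1 0 * (K 0 0 * H 0 1) = (0 : A) := by rw [halt2 (X 1 0) (K 0 0) (H 0 1), cX (H 0 1) (K 0 0), cK0 (X 0 1) (H 0 1)]; try abel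
    have e74 : H 1 0 * K 0 0 * X 0 1 - H 1 0 * (K 0 0 * X 0 1) = (0 : A) := by rw [swap13 (H 1 0) (K 0 0) (X 0 1), halt2 (X 0 1) (K 0 0) (H 1 0), cH (X 0 1) (K 0 0), cK0 (X 0 1) (H 0 1)]; try abel
    have e75 : K 1 0 * H 0 0 * X 0 1 - K 1 0 * (H 0 0 * X 0 1) = (0 : A) := by rw [swap13 (K 1 0) (H 0 0) (X 0 1), cH0 (X 0 1) (K 1 0)]; try abel
    have e76 : H 1 0 * X 0 0 * K 0 1 - H 1 0 * (X 0 0 * K 0 1) = (X 0 0 * H 0 1 * K 0 1 - X 0 0 * (H 0 1 * K 0 1)) := by rw [halt1 (H 1 0) (X 0 0) (K 0 1), cH (X 0 0) (K 0 1)]; try abel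
    have e77 : K 1 0 * X 0 0 * H 0 1 - K 1 0 * (X 0 0 * H 0 1) = -(X 0 0 * H 0 1 * K 0 1 - X 0 0 * (H 0 1 * K 0 1)) := by rw [swap13 (K 1 0) (X 0 0) (H 0 1), halt1 (H 0 1) (X 0 0) (K 1 0), cK (X 0 0) (H 0 1)]; try abel
    have e78 : X 1 0 * H 0 1 * K 1 1 - X 1 0 * (H 0 1 * K 1 1) = (0 : A) := by rw [cX (H 0 1) (K 1 1), cK3 (X 0 1) (H 0 1)]; try abel
    have e79 : X 1 0 * K 0 1 * H 1 1 - X 1 0 * (K 0 1 * H 1 1) = (0 : A) := by rw [halt2 (X 1 0) (K 0 1) (H 1 1), cX (H 1 1) (K 0 1), cH3 (X 0 1) (K 0 1)]; try abel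
    have e80 : H 1 0 * K 0 1 * X 1 1 - H 1 0 * (K 0 1 * X 1 1) = -(X 1 1 * H 0 1 * K 0 1 - X 1 1 * (H 0 1 * K 0 1)) := by rw [swap13 (H 1 0) (K 0 1) (X 1 1), halt2 (X 1 1) (K 0 1) (H 1 0), cH (X 1 1) (K 0 1)]; try abel
    have e81 : K 1 0 * H 0 1 * X 1 1 - K 1 0 * (H 0 1 * X 1 1) = (X 1 1 * H 0 1 * K 0 1 - X 1 1 * (H 0 1 * K 0 1)) := by rw [swap13 (K 1 0) (H 0 1) (X 1 1), cK (X 1 1) (H 0 1)]; try abel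
    have e82 : H 1 0 * X 0 1 * K 1 1 - H 1 0 * (X 0 1 * K 1 1) = (0 : A) := by rw [halt1 (H 1 0) (X 0 1) (K 1 1), cH (X 0 1) (K 1 1), cK3 (X 0 1) (H 0 1)]; try abel
    have e83 : K 1 0 * X 0 1 * H 1 1 - K 1 0 * (X 0 1 * H 1 1) = (0 : A) := by rw [swap13 (K 1 0) (X 0 1) (H 1 1), halt1 (H 1 1) (X 0 1) (K 1 0), cH3 (X 0 1) (K 1 0)]; try abel
    have e84 : X 1 1 * H 1 0 * K 0 1 - X 1 1 * (H 1 0 * K 0 1) = -(X 1 1 * H 0 1 * K 0 1 - X 1 1 * (H 0 1 * K 0 1)) := by rw [cH (X 1 1) (K 0 1)]; try abel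
    have e85 : X 1 1 * K 1 0 * H 0 1 - X 1 1 * (K 1 0 * H 0 1) = (X 1 1 * H 0 1 * K 0 1 - X 1 1 * (H 0 1 * K 0 1)) := by rw [halt2 (X 1 1) (K 1 0) (H 0 1), cK (X 1 1) (H 0 1)]; try abel
    have e86 : H 1 1 * K 1 0 * X 0 1 - H 1 1 * (K 1 0 * X 0 1) = (0 : A) := by rw [swap13 (H 1 1) (K 1 0) (X 0 1), halt2 (X 0 1) (K 1 0) (H 1 1), cH3 (X 0 1) (K 1 0)]; try abel
    have e87 : K 1 1 * H 1 0 * X 0 1 - K 1 1 * (H 1 0 * X 0 1) = (0 : A) := by rw [swap13 (K 1 1) (H 1 0) (X 0 1), cH (X 0 1) (K 1 1), cK3 (X 0 1) (H 0 1)]; try abel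
    have e88 : H 1 1 * X 1 0 * K 0 1 - H 1 1 * (X 1 0 * K 0 1) = (0 : A) := by rw [halt1 (H 1 1) (X 1 0) (K 0 1), cX (H 1 1) (K 0 1), cH3 (X 0 1) (K 0 1)]; try abel
    have e89 : K 1 1 * X 1 0 * H 0 1 - K 1 1 * (X 1 0 * H 0 1) = (0 : A) := by rw [swap13 (K 1 1) (X 1 0) (H 0 1), halt1 (H 0 1) (X 1 0) (K 1 1), cX (H 0 1) (K 1 1), cK3 (X 0 1) (H 0 1)]; try abel
    have e90 : X 1 1 * H 1 1 * K 1 1 - X 1 1 * (H 1 1 * K 1 1) = (0 : A) := by rw [cH3 (X 1 1) (K 1 1)]; try abel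
    have e91 : X 1 1 * K 1 1 * H 1 1 - X 1 1 * (K 1 1 * H 1 1) = (0 : A) := by rw [halt2 (X 1 1) (K 1 1) (H 1 1), cH3 (X 1 1) (K 1 1)]; try abel
    have e92 : H 1 1 * K 1 1 * X 1 1 - H 1 1 * (K 1 1 * X 1 1) = (0 : A) := by rw [swap13 (H 1 1) (K 1 1) (X 1 1), halt2 (X 1 1) (K 1 1) (H 1 1), cH3 (X 1 1) (K 1 1)]; try abel
    have e93 : K 1 1 * H 1 1 * X 1 1 - K 1 1 * (H 1 1 * X 1 1) = (0 : A) := by rw [swap13 (K 1 1) (H 1 1) (X 1 1), cH3 (X 1 1) (K 1 1)]; try abel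
    have e94 : H 1 1 * X 1 1 * K 1 1 - H 1 1 * (X 1 1 * K 1 1) = (0 : A) := by rw [halt1 (H 1 1) (X 1 1) (K 1 1), cH3 (X 1 1) (K 1 1)]; try abel
    have e95 : K 1 1 * X 1 1 * H 1 1 - K 1 1 * (X 1 1 * H 1 1) = (0 : A) := by rw [swap13 (K 1 1) (X 1 1) (H 1 1), halt1 (H 1 1) (X 1 1) (K 1 1), cH3 (X 1 1) (K 1 1)]; try abel
    linear_combination (norm := abel) -e72 -e73 -e74 -e75 +e76 +e77 -e78 -e79 -e80 -e81 +e82 +e83 -e84 -e85 -e86 -e87 +e88 +e89 -e90 -e91 -e92 -e93 +e94 +e95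
end

section
/- The map X ↦ C_X, where C_X(H) = X*H − H*X, is an isomorphism of real Lie algebras from sq(3) = {X ∈ M₃(ℍ) : Xᴴ = −X} (the antihermitian 3×3 quaternionic matrices with commutator bracket) onto the Lie algebra of Jordan derivations of H₃(ℍ) (with the commutator bracket of endomorphisms). -/
open Matrix Quaternion

attribute [local instance 100] LieRing.ofAssociativeRing

instance : StarModule ℝ ℍ[ℝ] := ⟨fun r q => by ext <;> simp⟩

/-- The real vector space `H₃(ℍ)` of hermitian 3×3 quaternionic matrices, as a submodule of
the 3×3 quaternionic matrices. -/
noncomputable def herm3H : Submodule ℝ (Matrix (Fin 3) (Fin 3) ℍ[ℝ]) where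
  carrier := {H | Hᴴ = H}
  add_mem' := by
    intro a b ha hb
    simp only [Set.mem_setOf_eq] at *
    rw [conjTranspose_add, ha, hb]
  zero_mem' := by simp [Set.mem_setOf_eq]
  smul_mem' := by
    intro r H hH
    simp only [Set.mem_setOf_eq] at *
    rw [conjTranspose_smul, hH, star_trivial]

/-- The Jordan product `H∘K = HK + KH` on `H₃(ℍ)`. -/
noncomputable def jpH (H K : herm3H) : herm3H :=
  ⟨H.1 * K.1 + K.1 * H.1, by
    have hH : (H.1)ᴴ = H.1 := H.2
    have hK : (K.1)ᴴ = K.1 := K.2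
    show (H.1 * K.1 + K.1 * H.1)ᴴ = H.1 * K.1 + K.1 * H.1
    rw [conjTranspose_add, conjTranspose_mul, conjTranspose_mul, hH, hK, add_comm]⟩

lemma jpH_addl (a b c : herm3H) : jpH (a + b) c = jpH a c + jpH b c := by
  apply Subtype.ext
  simp only [jpH, Submodule.coe_add, add_mul, mul_add]
  abel

lemma jpH_addr (a b c : herm3H) : jpH a (b + c) = jpH a b + jpH a c := by
  apply Subtype.ext
  simp only [jpH, Submodule.coe_add, add_mul, mul_add]
  abel

lemma jpH_subl (a b c : herm3H) : jpH (a - b) c = jpH a c - jpH b c := by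
  apply Subtype.ext
  simp only [jpH, Submodule.coe_sub, sub_mul, mul_sub, AddSubgroupClass.coe_sub]
  abel

lemma jpH_subr (a b c : herm3H) : jpH a (b - c) = jpH a b - jpH a c := by
  apply Subtype.ext
  simp only [jpH, Submodule.coe_sub, sub_mul, mul_sub, AddSubgroupClass.coe_sub]
  abel

lemma jpH_smull (r : ℝ) (a c : herm3H) : jpH (r • a) c = r • jpH a c := by
  apply Subtype.ext
  simp [jpH, smul_mul_assoc, mul_smul_comm, smul_add]

lemma jpH_smulr (r : ℝ) (a c : herm3H) : jpH a (r • c) = r • jpH a c := by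
  apply Subtype.ext
  simp [jpH, smul_mul_assoc, mul_smul_comm, smul_add]

/-- The real Lie algebra of Jordan derivations of `H₃(ℍ)`, as a Lie subalgebra of the
endomorphisms of `H₃(ℍ)` with the commutator bracket. -/
noncomputable def jderH : LieSubalgebra ℝ (Module.End ℝ herm3H) where
  carrier := {D | ∀ H K, D (jpH H K) = jpH (D H) K + jpH H (D K)}
  add_mem' := by
    intro D1 D2 h1 h2 H K
    simp only [LinearMap.add_apply, h1 H K, h2 H K, jpH_addl, jpH_addr]
    abel
  zero_mem' := by
    intro H K
    simp only [LinearMap.zero_apply]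
    have : jpH (0 : herm3H) K = 0 := Subtype.ext (by simp [jpH])
    have h2 : jpH H (0 : herm3H) = 0 := Subtype.ext (by simp [jpH])
    rw [this, h2, add_zero]
  smul_mem' := by
    intro r D hD H K
    simp only [LinearMap.smul_apply, hD H K, jpH_smull, jpH_smulr, smul_add]
  lie_mem' := by
    intro D1 D2 h1 h2 H K
    replace h1 : ∀ a b : herm3H, D1 (jpH a b) = jpH (D1 a) b + jpH a (D1 b) := h1
    replace h2 : ∀ a b : herm3H, D2 (jpH a b) = jpH (D2 a) b + jpH a (D2 b) := h2
    simp only [Ring.lie_def, LinearMap.sub_apply, Module.End.mul_apply, h2, map_add, h1,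
      jpH_subl, jpH_subr, jpH_addl, jpH_addr]
    abel
  
/-- The real Lie algebra `sq(3)` of antihermitian 3×3 quaternionic matrices. -/
noncomputable def sq3 : LieSubalgebra ℝ (Matrix (Fin 3) (Fin 3) ℍ[ℝ]) where
  carrier := {X | Xᴴ = -X}
  add_mem' := by
    intro a b ha1 hb1
    simp only [Set.mem_setOf_eq] at *
    rw [conjTranspose_add, ha1, hb1, neg_add]
  zero_mem' := by simp [Set.mem_setOf_eq]
  smul_mem' := by
    intro r X h1
    simp only [Set.mem_setOf_eq] at *
    rw [conjTranspose_smul, h1, star_trivial, smul_neg]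
  lie_mem' := by
    intro X Y hX1 hY1
    simp only [Set.mem_setOf_eq] at *
    rw [Ring.lie_def, conjTranspose_sub, conjTranspose_mul, conjTranspose_mul, hX1, hY1]
    simp only [neg_mul, mul_neg, neg_neg, neg_sub]

/-!
Injectivity: if `X` commutes with every hermitian matrix, it commutes with the matrix units
`E_ij = E_ii (E_ij + E_ji) E_jj`, so it is a scalar `c` commuting with all of `ℍ`; such a `c` is
real, and an antihermitian real scalar vanishes.

Surjectivity: let `D` be a Jordan derivation and `E_i = single i i 1`. Applying `D` to
`E_i ∘ E_i = 2 E_i` and `E_i ∘ E_j = 0` shows `D E_i = [X, E_i]` for an antihermitian `X`.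
Then `D' = D - C_X` kills every `E_i`, so it preserves each Peirce space
`{q E_ij + q̄ E_ji}`, acting there by some `δ_ij : ℍ → ℍ`. Applying `D'` to
`(q E_01 + ⋯) ∘ (p E_12 + ⋯) = q p E_02 + ⋯` gives `δ_02 (q p) = δ_01 q * p + q * δ_12 p`, so
`δ_02` corrected by the imaginary constants `a = δ_01 1` and `b = δ_12 1` is a derivation of
`ℍ`, hence inner, `[u, ·]`. This makes `D' = C_Y` with `Y = diag (u + a, u, u - b)`, and
`D = C_(X + Y)`.
-/

namespace Quaternion

@[simps] def unitI : ℍ[ℝ] := ⟨0, 1, 0, 0⟩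
@[simps] def unitJ : ℍ[ℝ] := ⟨0, 0, 1, 0⟩
@[simps] def unitK : ℍ[ℝ] := ⟨0, 0, 0, 1⟩

theorem re_smul_one_add_im_smul_units (q : ℍ[ℝ]) :
    q.re • 1 + q.imI • unitI + q.imJ • unitJ + q.imK • unitK = q := by
  ext <;> simp

theorem eq_zero_of_forall_commute {c : ℍ[ℝ]} (hc : ∀ q : ℍ[ℝ], c * q = q * c)
    (hs : star c = -c) : c = 0 := by
  have hI := congr_arg (fun q => (q.imJ, q.imK)) (hc unitI)
  have hJ := congr_arg (·.imK) (hc unitJ)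
  have hre := congr_arg (·.re) hs
  simp [imJ_mul, imK_mul] at hI hJ hre
  ext <;> simp <;> linarith

theorem exists_eq_mul_sub_mul_of_derivation (g : ℍ[ℝ] →ₗ[ℝ] ℍ[ℝ])
    (hg : ∀ p q, g (p * q) = g p * q + p * g q) :
    ∃ u : ℍ[ℝ], star u = -u ∧ ∀ q, g q = u * q - q * u := by
  have g1 : g 1 = 0 := by simpa using hg 1 1
  have hsq : ∀ e, e * e = -1 → g e * e + e * g e = 0 := fun e he => by
    rw [← hg, he, map_neg, g1, neg_zero]
  have hK : unitK = unitI * unitJ := by ext <;> simp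
  have aI := congr_arg (fun q => (q.re, q.imI)) (hsq unitI (by ext <;> simp))
  have aJ := congr_arg (fun q => (q.re, q.imJ)) (hsq unitJ (by ext <;> simp))
  have aK := congr_arg (·.imK) (hsq unitK (by ext <;> simp))
  rw [hK, hg] at aK
  simp [re_mul, imI_mul, imJ_mul, imK_mul] at aI aJ aK
  -- On imaginary quaternions `[u, ·]` is twice the cross product with `u`.
  set u : ℍ[ℝ] :=
    (2⁻¹ : ℝ) • ((g unitJ).imK • unitI - (g unitI).imK • unitJ + (g unitI).imJ • unitK)
  refine ⟨u, by ext <;> simp [u], fun q => ?_⟩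
  have cI : g unitI = u * unitI - unitI * u := by
    ext <;> simp [u, re_mul, imI_mul, imJ_mul, imK_mul] <;> linarith
  have cJ : g unitJ = u * unitJ - unitJ * u := by
    ext <;> simp [u, re_mul, imI_mul, imJ_mul, imK_mul] <;> linarith
  have cK : g unitK = u * unitK - unitK * u := by
    rw [hK, hg, cI, cJ]
    noncomm_ring
  rw [← re_smul_one_add_im_smul_units q]
  simp only [map_add, map_smul, g1, cI, cJ, cK, mul_add, add_mul, smul_mul_assoc, mul_smul_comm,
    one_mul, mul_one]
  module

end Quaternion

namespace Matrix

variable {n R : Type*} [Fintype n] [DecidableEq n] [Ring R]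

theorem apply_eq_zero_of_eq_single_mul_add_mul_single {B : Matrix n n R} {i : n}
    (h : B = single i i 1 * B + B * single i i 1) {a b : n} (hab : a = i ↔ b = i) :
    B a b = 0 := by
  have hB := congr_fun₂ h a b
  by_cases ha : a = i
  · obtain rfl := ha
    obtain rfl := hab.mp rfl
    simpa using hB
  · have hb : b ≠ i := fun hb => ha (hab.mpr hb)
    simpa [ha, hb] using hB

variable [StarRing R]

theorem eq_single_add_single_of_eq_single_mul_add_mul_single {B : Matrix n n R} (hB : Bᴴ = B)
    {i j : n} (hij : i ≠ j) (hi : B = single i i 1 * B + B * single i i 1)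
    (hj : B = single j j 1 * B + B * single j j 1) :
    B = single i j (B i j) + single j i (star (B i j)) := by
  ext a b
  by_cases hab : (a = i ∧ b = j) ∨ (a = j ∧ b = i)
  · rcases hab with ⟨rfl, rfl⟩ | ⟨rfl, rfl⟩
    · simp [hij.symm]
    · simp [hij, ← congr_fun₂ hB a b]
  · have hzero : (a = i ↔ b = i) ∨ (a = j ↔ b = j) := by grind
    rw [add_apply, single_apply, single_apply, if_neg (by grind), if_neg (by grind), add_zero]
    exact hzero.elim (apply_eq_zero_of_eq_single_mul_add_mul_single hi)
      (apply_eq_zero_of_eq_single_mul_add_mul_single hj)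

theorem exists_conjTranspose_eq_neg_commutator_single_eq (A : n → Matrix n n R)
    (hA : ∀ i, (A i)ᴴ = A i) (hdiag : ∀ i, A i = single i i 1 * A i + A i * single i i 1)
    (hcross : ∀ i j, i ≠ j →
      A i * single j j 1 + single j j 1 * A i + (single i i 1 * A j + A j * single i i 1) = 0) :
    ∃ X : Matrix n n R, Xᴴ = -X ∧ ∀ i, X * single i i 1 - single i i 1 * X = A i := by
  have hzero : ∀ i a b, (a = i ↔ b = i) → A i a b = 0 := fun i _ _ =>
    apply_eq_zero_of_eq_single_mul_add_mul_single (hdiag i)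
  have hanti : ∀ i j, i ≠ j → A j i j = -A i i j := fun i j hij => by
    have := congr_fun₂ (hcross i j hij) i j
    simp [hij, hij.symm] at this
    exact eq_neg_of_add_eq_zero_right this
  -- Column `b` of `X` is column `b` of `A b`, that is, `X = ∑ b, A b * single b b 1`.
  refine ⟨of fun a b => A b a b, ?_, fun i => ?_⟩
  · ext a b
    rcases eq_or_ne a b with rfl | hab
    · simp [hzero a a a Iff.rfl]
    · simp [← congr_fun₂ (hA a) a b, hanti a b hab]
  · ext a b
    by_cases hai : a = i <;> by_cases hbi : b = i
    · subst hai hbi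
      simpa using (hzero b b b Iff.rfl).symm
    · subst hai
      simp [hbi, hanti a b (Ne.symm hbi)]
    · subst hbi
      simp [hai]
    · simp [hai, hbi, hzero i a b (by simp [hai, hbi])]

theorem diagonal_mul_sub_mul_diagonal_single_add_single {y : n → R}
    (hy : ∀ i, star (y i) = -y i) (i j : n) (q : R) :
    diagonal y * (single i j q + single j i (star q))
        - (single i j q + single j i (star q)) * diagonal y
      = single i j (y i * q - q * y j) + single j i (star (y i * q - q * y j)) := by
  ext a b
  simp only [sub_apply, add_apply, diagonal_mul, mul_diagonal, single_apply, ite_and, star_sub,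
    star_mul, hy]
  split_ifs <;> subst_vars <;> noncomm_ring

end Matrix

local notation "𝕄" => Matrix (Fin 3) (Fin 3) ℍ[ℝ]

namespace herm3H

theorem mem_iff {H : 𝕄} : H ∈ herm3H ↔ Hᴴ = H := Iff.rfl

theorem coe_jpH (H K : herm3H) : (jpH H K : 𝕄) = H * K + K * H := rfl

theorem jpH_comm (H K : herm3H) : jpH H K = jpH K H := Subtype.ext (add_comm _ _)

noncomputable def diagUnit (i : Fin 3) : herm3H := ⟨single i i 1, by simp [mem_iff]⟩

noncomputable def offDiag (i j : Fin 3) : ℍ[ℝ] →ₗ[ℝ] herm3H where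
  toFun q := ⟨single i j q + single j i (star q), by simp [mem_iff, add_comm]⟩
  map_add' p q := Subtype.ext (by simp [single_add]; abel)
  map_smul' r q := Subtype.ext (by simp [smul_single])

@[simp] theorem coe_diagUnit (i : Fin 3) : (diagUnit i : 𝕄) = single i i 1 := rfl

@[simp] theorem coe_offDiag (i j : Fin 3) (q : ℍ[ℝ]) :
    (offDiag i j q : 𝕄) = single i j q + single j i (star q) := rfl

theorem offDiag_swap (i j : Fin 3) (q : ℍ[ℝ]) : offDiag j i (star q) = offDiag i j q :=
  Subtype.ext (by simp [add_comm])

theorem eq_sum_diagUnit_add_offDiag (H : herm3H) :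
    H = ∑ i, ((H : 𝕄) i i).re • diagUnit i + offDiag 0 1 ((H : 𝕄) 0 1)
      + offDiag 0 2 ((H : 𝕄) 0 2) + offDiag 1 2 ((H : 𝕄) 1 2) := by
  have hH : ∀ a b, star ((H : 𝕄) a b) = (H : 𝕄) b a := fun a b => congr_fun₂ H.2 b a
  have hdiag : ∀ a, ((H : 𝕄) a a).re • (1 : ℍ[ℝ]) = (H : 𝕄) a a := fun a => by
    rw [Quaternion.star_eq_self.mp (hH a a)]
    ext <;> simp
  ext a b : 2
  fin_cases a <;> fin_cases b <;> simp [Fin.sum_univ_three, hdiag, hH]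

theorem linearMap_ext {V : Type*} [AddCommGroup V] [Module ℝ V] {f g : herm3H →ₗ[ℝ] V}
    (hdiag : ∀ i, f (diagUnit i) = g (diagUnit i))
    (hoff : ∀ i j : Fin 3, i < j → ∀ q, f (offDiag i j q) = g (offDiag i j q)) : f = g := by
  ext H
  rw [eq_sum_diagUnit_add_offDiag H]
  simp [Fin.sum_univ_three, hdiag, hoff]

theorem jpH_diagUnit_self (i : Fin 3) : jpH (diagUnit i) (diagUnit i) = diagUnit i + diagUnit i :=
  Subtype.ext (by simp [coe_jpH])

theorem jpH_diagUnit_of_ne {i j : Fin 3} (hij : i ≠ j) : jpH (diagUnit i) (diagUnit j) = 0 :=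
  Subtype.ext (by simp [coe_jpH, hij, hij.symm])

theorem jpH_diagUnit_offDiag {i j : Fin 3} (hij : i ≠ j) (q : ℍ[ℝ]) :
    jpH (diagUnit i) (offDiag i j q) = offDiag i j q :=
  Subtype.ext (by simp [coe_jpH, mul_add, add_mul, hij, hij.symm])

theorem jpH_offDiag_offDiag (q p : ℍ[ℝ]) :
    jpH (offDiag 0 1 q) (offDiag 1 2 p) = offDiag 0 2 (q * p) :=
  Subtype.ext (by simp [coe_jpH, mul_add, add_mul])

theorem jpH_offDiag_offDiag_one {i j : Fin 3} (hij : i ≠ j) (p : ℍ[ℝ]) :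
    jpH (offDiag i j p) (offDiag i j 1) = (2 * p.re) • (diagUnit i + diagUnit j) := by
  have hp : (2 * p.re) • (1 : ℍ[ℝ]) = p + star p := by
    ext <;> simp
    ring
  refine Subtype.ext ?_
  simp [coe_jpH, mul_add, add_mul, hij, hij.symm, hp, single_add]
  abel

end herm3H

open herm3H

namespace sq3

theorem mem_iff {X : 𝕄} : X ∈ sq3 ↔ Xᴴ = -X := Iff.rfl

theorem eq_zero_of_forall_commute {X : 𝕄} (hX : X ∈ sq3) (h : ∀ H : herm3H, Commute X H) :
    X = 0 := by
  have hsingle : ∀ i j : Fin 3, i ≠ j → Commute (single i j 1) X := fun i j hij => by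
    have hprod : single i j (1 : ℍ[ℝ]) = diagUnit i * offDiag i j 1 * diagUnit j := by
      simp [mul_add, hij]
    rw [hprod]
    exact (((h _).mul_right (h _)).mul_right (h _)).symm
  obtain ⟨c, rfl⟩ := mem_range_scalar_of_commute_single hsingle
  have hc : ∀ q, c * q = q * c := fun q => by
    simpa using congr_fun₂ (h (offDiag 0 1 q)).eq 0 1
  have hs : star c = -c := by simpa using congr_fun₂ hX 0 0
  rw [Quaternion.eq_zero_of_forall_commute hc hs, map_zero]

theorem diagonal_mem {y : Fin 3 → ℍ[ℝ]} (hy : ∀ i, star (y i) = -y i) :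
    diagonal y ∈ sq3 := by
  rw [mem_iff, diagonal_conjTranspose, show star y = -y from funext hy]
  exact (diagonal_neg y).symm

end sq3

noncomputable def commutatorEnd (X : sq3) : Module.End ℝ herm3H where
  toFun H := ⟨X * H - H * X, by
    rw [herm3H.mem_iff, conjTranspose_sub, conjTranspose_mul, conjTranspose_mul, X.2, H.2]
    noncomm_ring⟩
  map_add' H K := Subtype.ext (by simp [mul_add, add_mul]; abel)
  map_smul' r H := Subtype.ext (by simp [smul_sub])

@[simp] theorem coe_commutatorEnd_apply (X : sq3) (H : herm3H) :
    (commutatorEnd X H : 𝕄) = X * H - H * X := rfl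

theorem commutatorEnd_mem_jderH (X : sq3) : commutatorEnd X ∈ jderH := fun H K =>
  Subtype.ext (by simp [coe_jpH]; noncomm_ring)

theorem commutatorEnd_diagonal_diagUnit {y : Fin 3 → ℍ[ℝ]} (hy : ∀ i, star (y i) = -y i)
    (i : Fin 3) : commutatorEnd ⟨diagonal y, sq3.diagonal_mem hy⟩ (diagUnit i) = 0 := by
  ext a b : 2
  simp only [coe_commutatorEnd_apply, coe_diagUnit, Matrix.sub_apply, diagonal_mul, mul_diagonal,
    single_apply, ZeroMemClass.coe_zero, Matrix.zero_apply]
  grind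

theorem commutatorEnd_diagonal_offDiag {y : Fin 3 → ℍ[ℝ]} (hy : ∀ i, star (y i) = -y i)
    (i j : Fin 3) (q : ℍ[ℝ]) :
    commutatorEnd ⟨diagonal y, sq3.diagonal_mem hy⟩ (offDiag i j q)
      = offDiag i j (y i * q - q * y j) :=
  Subtype.ext (diagonal_mul_sub_mul_diagonal_single_add_single hy i j q)

noncomputable def commutatorHom : sq3 →ₗ⁅ℝ⁆ jderH where
  toFun X := ⟨commutatorEnd X, commutatorEnd_mem_jderH X⟩
  map_add' X Y := by ext H : 3; simp [add_mul, mul_add]; abel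
  map_smul' r X := by ext H : 3; simp [smul_sub]
  map_lie' {X Y} := by ext H : 3; simp [Ring.lie_def]; noncomm_ring

theorem commutatorHom_injective : Function.Injective commutatorHom := by
  refine (injective_iff_map_eq_zero commutatorHom).mpr fun X hX => Subtype.ext ?_
  refine sq3.eq_zero_of_forall_commute X.2 fun H => sub_eq_zero.mp ?_
  exact congr_arg (fun D : jderH => ((D : Module.End ℝ herm3H) H : 𝕄)) hX

section JordanDerivation

variable {D : Module.End ℝ herm3H}

theorem coe_map_diagUnit_eq (hD : D ∈ jderH) (i : Fin 3) :
    (D (diagUnit i) : 𝕄)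
      = single i i 1 * (D (diagUnit i) : 𝕄) + (D (diagUnit i) : 𝕄) * single i i 1 := by
  have h := hD (diagUnit i) (diagUnit i)
  rw [jpH_diagUnit_self, map_add, jpH_comm (D _), ← two_smul ℝ, ← two_smul ℝ] at h
  exact congr_arg Subtype.val (smul_right_injective _ two_ne_zero h)

theorem coe_map_diagUnit_cross_eq_zero (hD : D ∈ jderH) {i j : Fin 3} (hij : i ≠ j) :
    (D (diagUnit i) : 𝕄) * single j j 1 + single j j 1 * (D (diagUnit i) : 𝕄)
      + (single i i 1 * (D (diagUnit j) : 𝕄) + (D (diagUnit j) : 𝕄) * single i i 1) = 0 := by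
  have h := hD (diagUnit i) (diagUnit j)
  rw [jpH_diagUnit_of_ne hij, map_zero] at h
  exact congr_arg Subtype.val h.symm

noncomputable def offDiagCoeff (D : Module.End ℝ herm3H) (i j : Fin 3) :
    ℍ[ℝ] →ₗ[ℝ] ℍ[ℝ] :=
  entryLinearMap ℝ ℍ[ℝ] i j ∘ₗ herm3H.subtype ∘ₗ D ∘ₗ offDiag i j

theorem map_offDiag (hD : D ∈ jderH) (hD0 : ∀ i, D (diagUnit i) = 0) {i j : Fin 3}
    (hij : i ≠ j) (q : ℍ[ℝ]) : D (offDiag i j q) = offDiag i j (offDiagCoeff D i j q) := by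
  set B : 𝕄 := (D (offDiag i j q) : 𝕄)
  have peirce : ∀ {k l : Fin 3} (p : ℍ[ℝ]), k ≠ l → offDiag k l p = offDiag i j q →
      B = single k k 1 * B + B * single k k 1 := fun {k l} p hkl hp => by
    have h := hD (diagUnit k) (offDiag k l p)
    rw [jpH_diagUnit_offDiag hkl, hD0, hp] at h
    simpa [coe_jpH] using congr_arg Subtype.val h
  exact Subtype.ext (eq_single_add_single_of_eq_single_mul_add_mul_single (D _).2 hij
    (peirce q hij rfl) (peirce (star q) hij.symm (offDiag_swap i j q)))

theorem offDiagCoeff_mul (hD : D ∈ jderH) (hD0 : ∀ i, D (diagUnit i) = 0) (q p : ℍ[ℝ]) :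
    offDiagCoeff D 0 2 (q * p) = offDiagCoeff D 0 1 q * p + q * offDiagCoeff D 1 2 p := by
  have h := hD (offDiag 0 1 q) (offDiag 1 2 p)
  rw [jpH_offDiag_offDiag, map_offDiag hD hD0 (by decide), map_offDiag hD hD0 (by decide),
    map_offDiag hD hD0 (by decide), jpH_offDiag_offDiag, jpH_offDiag_offDiag, ← map_add] at h
  simpa using congr_arg (fun H : herm3H => (H : 𝕄) 0 2) h

theorem star_offDiagCoeff_one (hD : D ∈ jderH) (hD0 : ∀ i, D (diagUnit i) = 0) {i j : Fin 3}
    (hij : i ≠ j) : star (offDiagCoeff D i j 1) = -offDiagCoeff D i j 1 := by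
  have h := hD (offDiag i j 1) (offDiag i j 1)
  rw [jpH_offDiag_offDiag_one hij, map_smul, map_add, hD0, hD0, map_offDiag hD hD0 hij,
    jpH_comm (offDiag i j 1), jpH_offDiag_offDiag_one hij] at h
  have := congr_arg (fun H : herm3H => ((H : 𝕄) i i).re) h
  simp [hij.symm] at this
  exact Quaternion.star_eq_neg.mpr (by linarith)

theorem exists_map_offDiag_eq (hD : D ∈ jderH) (hD0 : ∀ i, D (diagUnit i) = 0) :
    ∃ y : Fin 3 → ℍ[ℝ], (∀ i, star (y i) = -y i) ∧
      ∀ i j : Fin 3, i < j → ∀ q, D (offDiag i j q) = offDiag i j (y i * q - q * y j) := by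
  set a := offDiagCoeff D 0 1 1
  set b := offDiagCoeff D 1 2 1
  have h01 : ∀ q, offDiagCoeff D 0 1 q = offDiagCoeff D 0 2 q - q * b := fun q => by
    simpa using eq_sub_of_add_eq (offDiagCoeff_mul hD hD0 q 1).symm
  have h12 : ∀ q, offDiagCoeff D 1 2 q = offDiagCoeff D 0 2 q - a * q := fun q => by
    simpa using eq_sub_of_add_eq' (offDiagCoeff_mul hD hD0 1 q).symm
  obtain ⟨u, hu, hg⟩ := Quaternion.exists_eq_mul_sub_mul_of_derivation
    (offDiagCoeff D 0 2 - LinearMap.mulLeft ℝ a - LinearMap.mulRight ℝ b) fun q p => by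
      simp only [LinearMap.sub_apply, LinearMap.mulLeft_apply, LinearMap.mulRight_apply,
        offDiagCoeff_mul hD hD0, h01, h12]
      noncomm_ring
  have h02 : ∀ q, offDiagCoeff D 0 2 q = (u + a) * q - q * (u - b) := fun q => by
    rw [← sub_eq_zero, ← sub_eq_zero.mpr (hg q)]
    simp only [LinearMap.sub_apply, LinearMap.mulLeft_apply, LinearMap.mulRight_apply]
    noncomm_ring
  have ha : star a = -a := star_offDiagCoeff_one hD hD0 (by decide)
  have hb : star b = -b := star_offDiagCoeff_one hD hD0 (by decide)
  refine ⟨![u + a, u, u - b], fun i => ?_, fun i j hij q => ?_⟩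
  · fin_cases i <;> simp [hu, ha, hb] <;> abel
  · rw [map_offDiag hD hD0 hij.ne]
    congr 1
    fin_cases i <;> fin_cases j <;> (try exact absurd hij (by decide)) <;>
      simp [h01, h02, h12] <;> noncomm_ring

end JordanDerivation

theorem commutatorHom_surjective : Function.Surjective commutatorHom := by
  rintro ⟨D, hD⟩
  obtain ⟨X, hX, hXD⟩ := exists_conjTranspose_eq_neg_commutator_single_eq
    (fun i => (D (diagUnit i) : 𝕄)) (fun i => (D (diagUnit i)).2) (coe_map_diagUnit_eq hD)
    (fun i j hij => coe_map_diagUnit_cross_eq_zero hD hij)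
  set E : jderH := ⟨D, hD⟩ - commutatorHom ⟨X, hX⟩
  have hE0 : ∀ i, (E : Module.End ℝ herm3H) (diagUnit i) = 0 := fun i =>
    Subtype.ext (by simp [E, commutatorHom, hXD])
  obtain ⟨y, hy, hEy⟩ := exists_map_offDiag_eq E.2 hE0
  have hEY : E = commutatorHom ⟨diagonal y, sq3.diagonal_mem hy⟩ := by
    refine Subtype.ext (linearMap_ext (fun i => ?_) fun i j hij q => ?_)
    · exact (hE0 i).trans (commutatorEnd_diagonal_diagUnit hy i).symm
    · exact (hEy i j hij q).trans (commutatorEnd_diagonal_offDiag hy i j q).symm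
  refine ⟨⟨X, hX⟩ + ⟨diagonal y, sq3.diagonal_mem hy⟩, ?_⟩
  rw [map_add, ← hEY, add_sub_cancel]

/-- The map `X ↦ C_X`, `C_X(H) = XH - HX`, is an isomorphism of real Lie algebras from
`sq(3)` onto the Lie algebra of Jordan derivations of `H₃(ℍ)`. -/
theorem statement14 :
    ∃ e : sq3 ≃ₗ⁅ℝ⁆ jderH, ∀ (X : sq3) (H : herm3H),
      (((e X : Module.End ℝ herm3H) H : Matrix (Fin 3) (Fin 3) ℍ[ℝ]))
        = (X : Matrix (Fin 3) (Fin 3) ℍ[ℝ]) * (H : Matrix (Fin 3) (Fin 3) ℍ[ℝ])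
            - (H : Matrix (Fin 3) (Fin 3) ℍ[ℝ]) * (X : Matrix (Fin 3) (Fin 3) ℍ[ℝ]) :=
  ⟨.ofBijective commutatorHom ⟨commutatorHom_injective, commutatorHom_surjective⟩,
    fun _ _ => rfl⟩
end

section
/- Let V be a real inner product space and let J(V) = ℝ × V carry the commutative bilinear product (α,v)∘(β,w) = (α·β + ⟪v,w⟫, α·w + β·v). An ℝ-linear endomorphism D of ℝ × V is a derivation of this product (D(p∘q) = D(p)∘q + p∘D(q) for all p,q) if and only if there is a skew-adjoint ℝ-linear map T : V → V (⟪T v, w⟫ + ⟪v, T w⟫ = 0 for all v,w) with D(α,v) = (0, T v) for all (α,v). Consequently the derivation algebra of J(V) is isomorphic, as a real Lie algebra, to the Lie algebra of skew-adjoint endomorphisms of V. -/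
variable (V : Type*) [NormedAddCommGroup V] [InnerProductSpace ℝ V]

/-- The product of the Jordan algebra `J(V) = ℝ × V`:
`(α,v)∘(β,w) = (αβ + ⟪v,w⟫, αw + βv)`. -/
noncomputable def jmul (p q : ℝ × V) : ℝ × V :=
  (p.1 * q.1 + (inner ℝ p.2 q.2 : ℝ), p.1 • q.2 + q.1 • p.2)

variable {V}

lemma jmul_addl (p p' q : ℝ × V) : jmul V (p + p') q = jmul V p q + jmul V p' q := by
  unfold jmul
  refine Prod.ext ?_ ?_
  · simp only [Prod.fst_add, Prod.snd_add, inner_add_left]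
    ring
  · simp only [Prod.fst_add, Prod.snd_add, Prod.mk_add_mk, add_smul, smul_add]
    abel

lemma jmul_addr (p q q' : ℝ × V) : jmul V p (q + q') = jmul V p q + jmul V p q' := by
  unfold jmul
  refine Prod.ext ?_ ?_
  · simp only [Prod.fst_add, Prod.snd_add, inner_add_right]
    ring
  · simp only [Prod.fst_add, Prod.snd_add, Prod.mk_add_mk, add_smul, smul_add]
    abel

lemma jmul_subl (p p' q : ℝ × V) : jmul V (p - p') q = jmul V p q - jmul V p' q := by
  unfold jmul
  refine Prod.ext ?_ ?_
  · simp only [Prod.fst_sub, Prod.snd_sub, inner_sub_left, Prod.mk_sub_mk]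
    ring
  · simp only [Prod.fst_sub, Prod.snd_sub, Prod.mk_sub_mk, sub_smul, smul_sub]
    abel

lemma jmul_subr (p q q' : ℝ × V) : jmul V p (q - q') = jmul V p q - jmul V p q' := by
  unfold jmul
  refine Prod.ext ?_ ?_
  · simp only [Prod.fst_sub, Prod.snd_sub, inner_sub_right, Prod.mk_sub_mk]
    ring
  · simp only [Prod.fst_sub, Prod.snd_sub, Prod.mk_sub_mk, sub_smul, smul_sub]
    abel

lemma jmul_smull (r : ℝ) (p q : ℝ × V) : jmul V (r • p) q = r • jmul V p q := by
  unfold jmul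
  refine Prod.ext ?_ ?_
  · simp only [Prod.smul_fst, Prod.smul_snd, inner_smul_left, RCLike.star_def,
      starRingEnd_apply, star_trivial, smul_eq_mul]
    ring
  · show (r • p).1 • q.2 + q.1 • (r • p).2 = r • (p.1 • q.2 + q.1 • p.2)
    rw [Prod.smul_fst, Prod.smul_snd, smul_eq_mul, mul_smul, smul_comm q.1 r, smul_add]

lemma jmul_smulr (r : ℝ) (p q : ℝ × V) : jmul V p (r • q) = r • jmul V p q := by
  unfold jmul
  refine Prod.ext ?_ ?_
  · simp only [Prod.smul_fst, Prod.smul_snd, inner_smul_right, smul_eq_mul]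
    ring
  · show p.1 • (r • q).2 + (r • q).1 • p.2 = r • (p.1 • q.2 + q.1 • p.2)
    rw [Prod.smul_fst, Prod.smul_snd, smul_eq_mul, mul_smul, smul_comm p.1 r, smul_add]

variable (V)

attribute [local instance] LieRing.ofAssociativeRing

/-- The derivation algebra of `J(V)`, as a Lie subalgebra of the endomorphisms of
`ℝ × V` with the commutator bracket. -/
noncomputable def derJ : LieSubalgebra ℝ (Module.End ℝ (ℝ × V)) where
  carrier := {D | ∀ p q : ℝ × V, D (jmul V p q) = jmul V (D p) q + jmul V p (D q)}
  add_mem' := by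
    intro D1 D2 h1 h2 p q
    simp only [LinearMap.add_apply, h1 p q, h2 p q, jmul_addl, jmul_addr]
    abel
  zero_mem' := by
    intro p q
    simp only [LinearMap.zero_apply]
    have h1 : jmul V (0 : ℝ × V) q = 0 := by
      unfold jmul; simp
    have h2 : jmul V p (0 : ℝ × V) = 0 := by
      unfold jmul; simp
    rw [h1, h2, add_zero]
  smul_mem' := by
    intro r D hD p q
    simp only [LinearMap.smul_apply, hD p q, jmul_smull, jmul_smulr, smul_add]
  lie_mem' := by
    intro D1 D2 h1 h2 p q
    replace h1 : ∀ a b : ℝ × V, D1 (jmul V a b) = jmul V (D1 a) b + jmul V a (D1 b) := h1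
    replace h2 : ∀ a b : ℝ × V, D2 (jmul V a b) = jmul V (D2 a) b + jmul V a (D2 b) := h2
    simp only [Ring.lie_def, LinearMap.sub_apply, Module.End.mul_apply, h2, map_add, h1,
      jmul_subl, jmul_subr, jmul_addl, jmul_addr]
    abel

/-- The Lie algebra of skew-adjoint endomorphisms of `V`, with the commutator
bracket. -/
noncomputable def skewEnd : LieSubalgebra ℝ (Module.End ℝ V) where
  carrier := {T | ∀ v w : V, (inner ℝ (T v) w : ℝ) + (inner ℝ v (T w) : ℝ) = 0}
  add_mem' := by
    intro T S hT hS v w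
    simp only [LinearMap.add_apply, inner_add_left, inner_add_right]
    have := hT v w
    have := hS v w
    linarith
  zero_mem' := by
    intro v w
    simp
  smul_mem' := by
    intro r T hT v w
    simp only [LinearMap.smul_apply, inner_smul_left, inner_smul_right,
      RCLike.star_def, starRingEnd_apply, star_trivial, smul_eq_mul]
    linear_combination r * hT v w
  lie_mem' := by
    intro T S hT hS v w
    simp only [Ring.lie_def, LinearMap.sub_apply, Module.End.mul_apply, inner_sub_left,
      inner_sub_right]
    have h1 := hT (S v) w
    have h2 := hS v (T w)
    have h3 := hS (T v) w
    have h4 := hT v (S w)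
    linarith

/-! A derivation `D` of `J(V)` kills the unit `(1,0)`, hence every product
`(0,v)∘(0,w) = ⟪v,w⟫ • (1,0)`. The Leibniz rule on this product gives, in the scalar
component, skew-adjointness of `T v := (D(0,v)).2`, and for `v = w`, in the vector component,
`2 (D(0,v)).1 • v = 0`; so `D = 0 × T`. Conversely `0 × T` is a derivation for skew `T`, and
`T ↦ 0 × T` is an injective Lie homomorphism onto the derivations. -/

variable {V}

lemma jmul_unit_left (q : ℝ × V) : jmul V (1, 0) q = q := by
  simp [jmul]

lemma jmul_unit_right (q : ℝ × V) : jmul V q (1, 0) = q := by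
  simp [jmul]

lemma jmul_inr_inr (v w : V) : jmul V (0, v) (0, w) = (inner ℝ v w : ℝ) • ((1 : ℝ), (0 : V)) := by
  simp [jmul]

lemma mem_derJ_iff {D : Module.End ℝ (ℝ × V)} :
    D ∈ derJ V ↔ ∀ p q : ℝ × V, D (jmul V p q) = jmul V (D p) q + jmul V p (D q) :=
  Iff.rfl

lemma mem_skewEnd_iff {T : Module.End ℝ V} :
    T ∈ skewEnd V ↔ ∀ v w : V, (inner ℝ (T v) w : ℝ) + (inner ℝ v (T w) : ℝ) = 0 :=
  Iff.rfl

section Derivation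

variable {D : Module.End ℝ (ℝ × V)} (hD : D ∈ derJ V)
include hD

lemma map_unit_eq_zero_of_mem_derJ : D (1, 0) = 0 := by
  have h := hD (1, 0) (1, 0)
  rwa [jmul_unit_left, jmul_unit_right, jmul_unit_left, left_eq_add] at h

lemma jmul_map_inr_add_jmul_inr_map_eq_zero (v w : V) :
    jmul V (D (0, v)) (0, w) + jmul V (0, v) (D (0, w)) = 0 := by
  rw [← hD, jmul_inr_inr, map_smul, map_unit_eq_zero_of_mem_derJ hD, smul_zero]

lemma fst_map_inr_eq_zero_of_mem_derJ (v : V) : (D (0, v)).1 = 0 := by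
  rcases eq_or_ne v 0 with rfl | hv
  · rw [Prod.mk_zero_zero, map_zero, Prod.fst_zero]
  · have h := congrArg Prod.snd (jmul_map_inr_add_jmul_inr_map_eq_zero hD v v)
    simp only [jmul, zero_smul, add_zero, zero_add, Prod.snd_add, Prod.snd_zero,
      ← two_smul ℝ, smul_smul, smul_eq_zero, mul_eq_zero, two_ne_zero, false_or] at h
    exact h.resolve_right hv

lemma snd_comp_comp_inr_mem_skewEnd_of_mem_derJ :
    LinearMap.snd ℝ ℝ V ∘ₗ D ∘ₗ LinearMap.inr ℝ ℝ V ∈ skewEnd V := by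
  intro v w
  have h := congrArg Prod.fst (jmul_map_inr_add_jmul_inr_map_eq_zero hD v w)
  simpa [jmul, fst_map_inr_eq_zero_of_mem_derJ hD] using h

lemma eq_prodMap_zero_of_mem_derJ :
    D = LinearMap.prodMap 0 (LinearMap.snd ℝ ℝ V ∘ₗ D ∘ₗ LinearMap.inr ℝ ℝ V) := by
  ext p
  · simp [map_unit_eq_zero_of_mem_derJ hD]
  · simp [map_unit_eq_zero_of_mem_derJ hD, Prod.mk_zero_zero]
  · simp [fst_map_inr_eq_zero_of_mem_derJ hD]
  · simp

end Derivation

lemma prodMap_zero_mem_derJ {T : Module.End ℝ V} (hT : T ∈ skewEnd V) :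
    LinearMap.prodMap 0 T ∈ derJ V := by
  intro p q
  ext
  · simpa [jmul, eq_comm] using hT p.2 q.2
  · simp [jmul, add_comm]

lemma mem_derJ_iff_exists_prodMap_zero {D : Module.End ℝ (ℝ × V)} :
    D ∈ derJ V ↔ ∃ T ∈ skewEnd V, D = LinearMap.prodMap 0 T := by
  refine ⟨fun hD => ?_, ?_⟩
  · exact ⟨_, snd_comp_comp_inr_mem_skewEnd_of_mem_derJ hD, eq_prodMap_zero_of_mem_derJ hD⟩
  · rintro ⟨T, hT, rfl⟩
    exact prodMap_zero_mem_derJ hT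

variable (V)

noncomputable def skewEndToDerJ : skewEnd V →ₗ⁅ℝ⁆ derJ V where
  toFun T := ⟨LinearMap.prodMap 0 T, prodMap_zero_mem_derJ T.2⟩
  map_add' T S := by ext <;> simp
  map_smul' r T := by ext <;> simp
  map_lie' {T S} := by ext <;> simp [Ring.lie_def]

lemma skewEndToDerJ_bijective : Function.Bijective (skewEndToDerJ V) := by
  refine ⟨fun T S h => ?_, fun D => ?_⟩
  · ext v
    exact congrArg (fun D : derJ V => ((D : Module.End ℝ (ℝ × V)) (0, v)).2) h
  · obtain ⟨T, hT, hDT⟩ := mem_derJ_iff_exists_prodMap_zero.mp D.2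
    exact ⟨⟨T, hT⟩, Subtype.ext hDT.symm⟩

/-- An endomorphism `D` of `ℝ × V` is a derivation of `J(V)` iff `D(α,v) = (0, Tv)`
for a skew-adjoint `T : V → V`; consequently the derivation algebra of `J(V)` is
isomorphic, as a real Lie algebra, to the Lie algebra of skew-adjoint endomorphisms
of `V`. -/
theorem statement15 :
    (∀ D : (ℝ × V) →ₗ[ℝ] (ℝ × V),
      (∀ p q : ℝ × V, D (jmul V p q) = jmul V (D p) q + jmul V p (D q)) ↔
        ∃ T : V →ₗ[ℝ] V, (∀ v w : V, (inner ℝ (T v) w : ℝ) + (inner ℝ v (T w) : ℝ) = 0) ∧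
          ∀ p : ℝ × V, D p = (0, T p.2))
    ∧ Nonempty (derJ V ≃ₗ⁅ℝ⁆ skewEnd V) := by
  refine ⟨fun D => ?_, ⟨(LieEquiv.ofBijective _ (skewEndToDerJ_bijective V)).symm⟩⟩
  simp only [← mem_derJ_iff, mem_derJ_iff_exists_prodMap_zero, mem_skewEnd_iff, LinearMap.ext_iff,
    LinearMap.prodMap_apply, LinearMap.zero_apply]
end

section
/- The real Lie algebra of Jordan derivations of H₂(ℍ), the hermitian 2×2 quaternionic matrices with Jordan product X∘Y = X*Y + Y*X (derivations taken with the commutator bracket of endomorphisms), is isomorphic to so(5), the Lie algebra of skew-symmetric real 5×5 matrices with the commutator bracket. -/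
open Matrix Quaternion

attribute [local instance 100] LieRing.ofAssociativeRing

/-- The real vector space `H₂(ℍ)` of hermitian 2×2 quaternionic matrices, as a submodule of
the 3×3 quaternionic matrices. -/
noncomputable def herm2H : Submodule ℝ (Matrix (Fin 2) (Fin 2) ℍ[ℝ]) where
  carrier := {H | Hᴴ = H}
  add_mem' := by
    intro a b ha hb
    simp only [Set.mem_setOf_eq] at *
    rw [conjTranspose_add, ha, hb]
  zero_mem' := by simp [Set.mem_setOf_eq]
  smul_mem' := by
    intro r H hH
    simp only [Set.mem_setOf_eq] at *
    rw [conjTranspose_smul, hH, star_trivial]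

/-- The Jordan product `H∘K = HK + KH` on `H₂(ℍ)`. -/
noncomputable def jp2 (H K : herm2H) : herm2H :=
  ⟨H.1 * K.1 + K.1 * H.1, by
    have hH : (H.1)ᴴ = H.1 := H.2
    have hK : (K.1)ᴴ = K.1 := K.2
    show (H.1 * K.1 + K.1 * H.1)ᴴ = H.1 * K.1 + K.1 * H.1
    rw [conjTranspose_add, conjTranspose_mul, conjTranspose_mul, hH, hK, add_comm]⟩

lemma jp2_addl (a b c : herm2H) : jp2 (a + b) c = jp2 a c + jp2 b c := by
  apply Subtype.ext
  simp only [jp2, Submodule.coe_add, add_mul, mul_add]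
  abel

lemma jp2_addr (a b c : herm2H) : jp2 a (b + c) = jp2 a b + jp2 a c := by
  apply Subtype.ext
  simp only [jp2, Submodule.coe_add, add_mul, mul_add]
  abel

lemma jp2_subl (a b c : herm2H) : jp2 (a - b) c = jp2 a c - jp2 b c := by
  apply Subtype.ext
  simp only [jp2, Submodule.coe_sub, sub_mul, mul_sub, AddSubgroupClass.coe_sub]
  abel

lemma jp2_subr (a b c : herm2H) : jp2 a (b - c) = jp2 a b - jp2 a c := by
  apply Subtype.ext
  simp only [jp2, Submodule.coe_sub, sub_mul, mul_sub, AddSubgroupClass.coe_sub]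
  abel

lemma jp2_smull (r : ℝ) (a c : herm2H) : jp2 (r • a) c = r • jp2 a c := by
  apply Subtype.ext
  simp [jp2, smul_mul_assoc, mul_smul_comm, smul_add]

lemma jp2_smulr (r : ℝ) (a c : herm2H) : jp2 a (r • c) = r • jp2 a c := by
  apply Subtype.ext
  simp [jp2, smul_mul_assoc, mul_smul_comm, smul_add]

/-- The real Lie algebra of Jordan derivations of `H₂(ℍ)`, as a Lie subalgebra of the
endomorphisms of `H₂(ℍ)` with the commutator bracket. -/
noncomputable def jder2 : LieSubalgebra ℝ (Module.End ℝ herm2H) where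
  carrier := {D | ∀ H K, D (jp2 H K) = jp2 (D H) K + jp2 H (D K)}
  add_mem' := by
    intro D1 D2 h1 h2 H K
    simp only [LinearMap.add_apply, h1 H K, h2 H K, jp2_addl, jp2_addr]
    abel
  zero_mem' := by
    intro H K
    simp only [LinearMap.zero_apply]
    have : jp2 (0 : herm2H) K = 0 := Subtype.ext (by simp [jp2])
    have h2 : jp2 H (0 : herm2H) = 0 := Subtype.ext (by simp [jp2])
    rw [this, h2, add_zero]
  smul_mem' := by
    intro r D hD H K
    simp only [LinearMap.smul_apply, hD H K, jp2_smull, jp2_smulr, smul_add]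
  lie_mem' := by
    intro D1 D2 h1 h2 H K
    replace h1 : ∀ a b : herm2H, D1 (jp2 a b) = jp2 (D1 a) b + jp2 a (D1 b) := h1
    replace h2 : ∀ a b : herm2H, D2 (jp2 a b) = jp2 (D2 a) b + jp2 a (D2 b) := h2
    simp only [Ring.lie_def, LinearMap.sub_apply, Module.End.mul_apply, h2, map_add, h1,
      jp2_subl, jp2_subr, jp2_addl, jp2_addr]
    abel
  
/-- The real Lie algebra `so(5)` of skew-symmetric real 5×5 matrices. -/
def so5 : LieSubalgebra ℝ (Matrix (Fin 5) (Fin 5) ℝ) where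
  carrier := {B | Bᵀ = -B}
  add_mem' := by
    intro a b ha hb
    simp only [Set.mem_setOf_eq] at *
    rw [transpose_add, ha, hb, neg_add]
  zero_mem' := by simp [Set.mem_setOf_eq]
  smul_mem' := by
    intro r X h
    simp only [Set.mem_setOf_eq] at *
    rw [transpose_smul, h, smul_neg]
  lie_mem' := by
    intro X Y hX hY
    simp only [Set.mem_setOf_eq] at *
    rw [Ring.lie_def, transpose_sub, transpose_mul, transpose_mul, hX, hY]
    simp only [neg_mul, mul_neg, neg_neg, neg_sub]

/-!
In the coordinates `(a + b, a - b, 2q) ∈ ℝ × ℝ⁵` of `H = !![a, q; star q, b]`, the Jordan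
product of `H₂(ℍ)` becomes the spin factor product `(s, u)(t, v) = (st + u ⬝ v, s v + t u)`.
A derivation `D` of a spin factor kills its unit `(1, 0)`; since `(0, u)² = (u ⬝ u, 0)` is a
multiple of the unit, `D` maps `0 × ℝⁿ` into itself, where it acts by a matrix `A` with
`A u ⬝ v + u ⬝ A v = 0`, i.e. `A ∈ so(n)`. Conversely every `A ∈ so(n)` acts as a derivation.
-/

section Derivations

variable {R M N : Type*} [CommRing R] [AddCommGroup M] [Module R M] [AddCommGroup N] [Module R N]

def derivations (μ : M →ₗ[R] M →ₗ[R] M) : LieSubalgebra R (Module.End R M) where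
  carrier := {D | ∀ x y, D (μ x y) = μ (D x) y + μ x (D y)}
  add_mem' {D₁ D₂} h₁ h₂ x y := by
    simp only [LinearMap.add_apply, h₁ x y, h₂ x y, map_add]
    abel
  zero_mem' x y := by simp
  smul_mem' c D h x y := by simp [h x y]
  lie_mem' {D₁ D₂} (h₁ : ∀ x y, _) (h₂ : ∀ x y, _) x y := by
    simp only [Ring.lie_def, LinearMap.sub_apply, Module.End.mul_apply, h₁, h₂, map_add, map_sub]
    abel

variable {μ : M →ₗ[R] M →ₗ[R] M} {ν : N →ₗ[R] N →ₗ[R] N} {D : Module.End R M}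

theorem apply_eq_zero_of_mem_derivations (hD : D ∈ derivations μ) {e : M}
    (hl : ∀ x, μ e x = x) (hr : ∀ x, μ x e = x) : D e = 0 := by
  have h := hD e e
  rw [hl, hl, hr] at h
  simpa using h

theorem LinearEquiv.conjAlgEquiv_mem_derivations (e : M ≃ₗ[R] N)
    (he : ∀ x y, e (μ x y) = ν (e x) (e y)) (hD : D ∈ derivations μ) :
    e.conjAlgEquiv R D ∈ derivations ν := by
  intro x y
  obtain ⟨x, rfl⟩ := e.surjective x
  obtain ⟨y, rfl⟩ := e.surjective y
  simp [LinearEquiv.conjAlgEquiv_apply, ← he, hD x y]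

theorem LinearEquiv.map_conjAlgEquiv_derivations (e : M ≃ₗ[R] N)
    (he : ∀ x y, e (μ x y) = ν (e x) (e y)) :
    (derivations μ).map (e.conjAlgEquiv R).toLieEquiv.toLieHom = derivations ν := by
  have he' : ∀ x y, e.symm (ν x y) = μ (e.symm x) (e.symm y) := fun x y =>
    e.injective (by simp [he])
  ext D
  refine ⟨?_, fun hD => ⟨_, e.symm.conjAlgEquiv_mem_derivations he' hD, ?_⟩⟩
  · rintro ⟨D, hD, rfl⟩
    exact e.conjAlgEquiv_mem_derivations he hD
  · ext x
    simp [LinearEquiv.conjAlgEquiv_apply]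

noncomputable def LinearEquiv.derivationsCongr (e : M ≃ₗ[R] N)
    (he : ∀ x y, e (μ x y) = ν (e x) (e y)) : derivations μ ≃ₗ⁅R⁆ derivations ν :=
  LieEquiv.ofSubalgebras _ _ (e.conjAlgEquiv R).toLieEquiv (e.map_conjAlgEquiv_derivations he)

end Derivations

section SpinFactor

variable {K ι : Type*} [CommRing K] [Fintype ι]

theorem Matrix.transpose_eq_neg_iff_mulVec_dotProduct {A : Matrix ι ι K} :
    Aᵀ = -A ↔ ∀ u v, A *ᵥ u ⬝ᵥ v + u ⬝ᵥ A *ᵥ v = 0 := by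
  have key : ∀ u v, A *ᵥ u ⬝ᵥ v + u ⬝ᵥ A *ᵥ v = (A + Aᵀ) *ᵥ u ⬝ᵥ v := fun u v => by
    rw [dotProduct_mulVec, ← mulVec_transpose, add_mulVec, add_dotProduct, dotProduct_comm]
  have hA : (∀ u, (A + Aᵀ) *ᵥ u = 0) ↔ A + Aᵀ = 0 :=
    ⟨fun h => mulVec_injective (funext fun u => by simp [h]), fun h u => by simp [h]⟩
  simp only [key, dotProduct_eq_zero_iff, hA]
  rw [add_comm, add_eq_zero_iff_eq_neg]

variable (K ι) in
def spinMul : (K × (ι → K)) →ₗ[K] (K × (ι → K)) →ₗ[K] (K × (ι → K)) :=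
  LinearMap.mk₂ K (fun x y => (x.1 * y.1 + x.2 ⬝ᵥ y.2, x.1 • y.2 + y.1 • x.2))
    (fun x x' y => by ext <;> simp [add_dotProduct] <;> ring)
    (fun c x y => by ext <;> simp <;> ring)
    (fun x y y' => by ext <;> simp [dotProduct_add] <;> ring)
    (fun c x y => by ext <;> simp <;> ring)

@[simp]
theorem spinMul_apply (x y : K × (ι → K)) :
    spinMul K ι x y = (x.1 * y.1 + x.2 ⬝ᵥ y.2, x.1 • y.2 + y.1 • x.2) :=
  rfl

theorem spinMul_comm (x y : K × (ι → K)) : spinMul K ι x y = spinMul K ι y x := by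
  ext <;> simp [mul_comm, dotProduct_comm, add_comm]

theorem spinMul_one_left (y : K × (ι → K)) : spinMul K ι (1, 0) y = y := by
  ext <;> simp

theorem spinMul_inr_inr (u v : ι → K) : spinMul K ι (0, u) (0, v) = (u ⬝ᵥ v) • (1, 0) := by
  ext <;> simp

theorem apply_one_eq_zero_of_mem_derivations_spinMul {D : Module.End K (K × (ι → K))}
    (hD : D ∈ derivations (spinMul K ι)) : D (1, 0) = 0 :=
  apply_eq_zero_of_mem_derivations hD spinMul_one_left
    fun x => (spinMul_comm x _).trans (spinMul_one_left x)

theorem fst_apply_inr_eq_zero_of_mem_derivations_spinMul [NoZeroDivisors K] [NeZero (2 : K)]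
    {D : Module.End K (K × (ι → K))} (hD : D ∈ derivations (spinMul K ι)) (u : ι → K) :
    (D (0, u)).1 = 0 := by
  have h := hD (0, u) (0, u)
  rw [spinMul_inr_inr, map_smul, apply_one_eq_zero_of_mem_derivations_spinMul hD, smul_zero,
    spinMul_comm (D _), ← two_smul K] at h
  rcases eq_or_ne u 0 with rfl | hu
  · simp only [Prod.mk_zero_zero, map_zero, Prod.fst_zero]
  · simpa [hu, two_ne_zero] using (congrArg Prod.snd h).symm

variable [DecidableEq ι]

variable (K ι) in
def spinDer : Matrix ι ι K →ₗ⁅K⁆ Module.End K (K × (ι → K)) where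
  toFun A := LinearMap.prodMap 0 (toLin' A)
  map_add' A B := by ext <;> simp
  map_smul' c A := by ext <;> simp
  map_lie' {A B} := by ext <;> simp [Ring.lie_def]

@[simp]
theorem spinDer_apply (A : Matrix ι ι K) (x : K × (ι → K)) : spinDer K ι A x = (0, A *ᵥ x.2) :=
  rfl

theorem spinDer_injective : Function.Injective (spinDer K ι) := by
  intro A B h
  refine mulVec_injective (funext fun u => ?_)
  simpa using congrArg (fun D => (D (0, u)).2) h

theorem spinDer_mem_derivations {A : Matrix ι ι K} (hA : Aᵀ = -A) :
    spinDer K ι A ∈ derivations (spinMul K ι) := by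
  intro x y
  have h := transpose_eq_neg_iff_mulVec_dotProduct.mp hA x.2 y.2
  ext <;> simp [mulVec_add, mulVec_smul, h, add_comm]

theorem mem_derivations_spinMul_iff [NoZeroDivisors K] [NeZero (2 : K)]
    {D : Module.End K (K × (ι → K))} :
    D ∈ derivations (spinMul K ι) ↔ ∃ A : Matrix ι ι K, Aᵀ = -A ∧ spinDer K ι A = D := by
  refine ⟨fun hD => ?_, fun ⟨A, hA, hAD⟩ => hAD ▸ spinDer_mem_derivations hA⟩
  set A := LinearMap.toMatrix' (LinearMap.snd K K (ι → K) ∘ₗ D ∘ₗ LinearMap.inr K K (ι → K))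
  have hinl : ∀ s : K, D (s, 0) = 0 := fun s => by
    rw [show ((s, 0) : K × (ι → K)) = s • (1, 0) by simp, map_smul,
      apply_one_eq_zero_of_mem_derivations_spinMul hD, smul_zero]
  have hinr : ∀ u, D (0, u) = (0, A *ᵥ u) := fun u => by
    ext
    · exact fst_apply_inr_eq_zero_of_mem_derivations_spinMul hD u
    · simp [A]
  refine ⟨A, transpose_eq_neg_iff_mulVec_dotProduct.mpr fun u v => ?_, ?_⟩
  · simpa [spinMul_inr_inr, hinl, hinr] using (congrArg Prod.fst (hD (0, u) (0, v))).symm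
  · refine LinearMap.prod_ext ?_ (LinearMap.ext fun u => by simp [hinr])
    ext1
    simp [hinl]

open LieAlgebra.Orthogonal

theorem range_spinDer_comp_so_incl [NoZeroDivisors K] [NeZero (2 : K)] :
    ((spinDer K ι).comp (so ι K).incl).range = derivations (spinMul K ι) := by
  ext D
  simp only [LieHom.mem_range, mem_derivations_spinMul_iff, LieHom.coe_comp,
    Function.comp_apply, Subtype.exists, mem_so, LieSubalgebra.coe_incl, exists_prop]

noncomputable def soEquivDerivationsSpinMul [NoZeroDivisors K] [NeZero (2 : K)] :
    so ι K ≃ₗ⁅K⁆ derivations (spinMul K ι) :=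
  (LieEquiv.ofInjective ((spinDer K ι).comp (so ι K).incl)
    (spinDer_injective.comp Subtype.val_injective)).trans
    (LieEquiv.ofEq _ _ (congrArg _ range_spinDer_comp_so_incl))

end SpinFactor

theorem herm2H.star_apply (H : herm2H) (i j : Fin 2) : star (H.1 j i) = H.1 i j :=
  congrFun (congrFun (show (H.1)ᴴ = H.1 from H.2) i) j

noncomputable def herm2H.mk (a b : ℝ) (q : ℍ[ℝ]) : herm2H :=
  ⟨!![(a : ℍ[ℝ]), q; star q, (b : ℍ[ℝ])], by
    refine Matrix.ext fun i j => ?_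
    fin_cases i <;> fin_cases j <;> simp⟩

theorem herm2H.eq_mk (H : herm2H) : H = herm2H.mk (H.1 0 0).re (H.1 1 1).re (H.1 0 1) := by
  have hd : ∀ i, H.1 i i = ((H.1 i i).re : ℍ[ℝ]) := fun i =>
    Quaternion.star_eq_self.mp (herm2H.star_apply H i i)
  apply Subtype.ext
  show H.1 = !![_, _; _, _]
  rw [← hd, ← hd, herm2H.star_apply]
  exact eta_fin_two _

theorem jp2_mk (a b c d : ℝ) (p q : ℍ[ℝ]) :
    jp2 (herm2H.mk a b p) (herm2H.mk c d q) =
      herm2H.mk (2 * (a * c + inner ℝ p q)) (2 * (b * d + inner ℝ p q))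
        ((a + b) • q + (c + d) • p) := by
  apply Subtype.ext
  refine Matrix.ext fun i j => ?_
  fin_cases i <;> fin_cases j <;> ext <;> simp [jp2, herm2H.mk, Quaternion.inner_def] <;> ring

noncomputable def hermCoord : herm2H ≃ₗ[ℝ] ℝ × (Fin 5 → ℝ) where
  toFun H := ((H.1 0 0).re + (H.1 1 1).re, ![(H.1 0 0).re - (H.1 1 1).re,
    2 * (H.1 0 1).re, 2 * (H.1 0 1).imI, 2 * (H.1 0 1).imJ, 2 * (H.1 0 1).imK])
  map_add' H K := by
    ext i
    · simp; ring
    · fin_cases i <;> simp <;> ring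
  map_smul' c H := by
    ext i
    · simp; ring
    · fin_cases i <;> simp <;> ring
  invFun x := herm2H.mk ((x.1 + x.2 0) / 2) ((x.1 - x.2 0) / 2)
    ⟨x.2 1 / 2, x.2 2 / 2, x.2 3 / 2, x.2 4 / 2⟩
  left_inv H := by
    conv_rhs => rw [herm2H.eq_mk H]
    simp
    rfl
  right_inv x := by
    ext i
    · simp [herm2H.mk, -Quaternion.coe_div, -Quaternion.coe_add, -Quaternion.coe_sub]
      ring
    · fin_cases i <;>
        simp [herm2H.mk, -Quaternion.coe_div, -Quaternion.coe_add, -Quaternion.coe_sub] <;> ring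

theorem hermCoord_mk (a b : ℝ) (q : ℍ[ℝ]) :
    hermCoord (herm2H.mk a b q) =
      (a + b, ![a - b, 2 * q.re, 2 * q.imI, 2 * q.imJ, 2 * q.imK]) := by
  simp [hermCoord, herm2H.mk]

theorem hermCoord_jp2 (H K : herm2H) :
    hermCoord (jp2 H K) = spinMul ℝ (Fin 5) (hermCoord H) (hermCoord K) := by
  rw [herm2H.eq_mk H, herm2H.eq_mk K, jp2_mk, hermCoord_mk, hermCoord_mk, hermCoord_mk]
  ext i
  · simp [Quaternion.inner_def]
    ring
  · fin_cases i <;> simp <;> ring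

noncomputable def jordanMul : herm2H →ₗ[ℝ] herm2H →ₗ[ℝ] herm2H :=
  LinearMap.mk₂ ℝ jp2 jp2_addl jp2_smull jp2_addr jp2_smulr

theorem jder2_eq_derivations_jordanMul : jder2 = derivations jordanMul :=
  rfl

theorem so5_eq_so : so5 = LieAlgebra.Orthogonal.so (Fin 5) ℝ :=
  LieSubalgebra.ext _ _ fun B => (LieAlgebra.Orthogonal.mem_so (Fin 5) ℝ B).symm

/-- The real Lie algebra of Jordan derivations of `H₂(ℍ)` (hermitian 2×2 quaternionic
matrices with the Jordan product) is isomorphic to `so(5)`, the skew-symmetric real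
5×5 matrices with the commutator bracket. -/
theorem statement16 : Nonempty (jder2 ≃ₗ⁅ℝ⁆ so5) := by
  rw [jder2_eq_derivations_jordanMul, so5_eq_so]
  exact ⟨(hermCoord.derivationsCongr hermCoord_jp2).trans soEquivDerivationsSpinMul.symm⟩
end
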